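/- arXiv:2012.05050 — 7 statements merged into one kernel-verified Lean document; each statement's English description precedes it below -/
import Mathlib

section
/- (Singleton bound for symbol-pair codes) Let q ≥ 2 and 2 ≤ d_p ≤ n. If C ⊆ F_q^n is a code with minimum symbol-pair distance d_p, then |C| ≤ q^{n - d_p + 2}. -/
/-!
Two codewords that agree on the first `n - d + 2` coordinates can only differ in a pair
`(x i, x (i + 1))` with `n - d + 1 ≤ i`, i.e. in at most `d - 1` pairs. Hence in a code of
minimum pair distance `d` the projection onto the first `n - d + 2` coordinates is injective.
-/

open Finset

/-- Symbol-pair distance between two vectors (indices mod n). -/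
def pairDist {F : Type*} [DecidableEq F] {n : ℕ} [NeZero n] (x y : Fin n → F) : ℕ :=
  (Finset.univ.filter fun i : Fin n => ¬(x i = y i ∧ x (i + 1) = y (i + 1))).card

theorem Fin.card_filter_le_val (n a : ℕ) : #{i : Fin n | a ≤ (i : ℕ)} = n - a := by
  rw [← Nat.card_Ico, ← card_map Fin.valEmbedding]
  congr 1
  ext j
  simp only [mem_map, mem_filter, mem_univ, true_and, Fin.valEmbedding_apply, mem_Ico]
  exact ⟨by rintro ⟨i, hi, rfl⟩; exact ⟨hi, i.isLt⟩, fun h => ⟨⟨j, h.2⟩, h.1, rfl⟩⟩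

theorem Fin.val_add_one_le_succ {n : ℕ} [NeZero n] (i : Fin n) :
    ((i + 1 : Fin n) : ℕ) ≤ i + 1 := by
  rw [Fin.val_add]
  exact (Nat.mod_le _ _).trans (Nat.add_le_add_left (Nat.mod_le _ _) _)

theorem pairDist_le_of_forall_val_lt_eq {F : Type*} [DecidableEq F] {n : ℕ} [NeZero n]
    {x y : Fin n → F} {k : ℕ} (h : ∀ i : Fin n, (i : ℕ) < k → x i = y i) :
    pairDist x y ≤ n + 1 - k := by
  have hsub : univ.filter (fun i : Fin n => ¬(x i = y i ∧ x (i + 1) = y (i + 1))) ⊆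
      univ.filter (fun i : Fin n => k - 1 ≤ (i : ℕ)) := by
    intro i
    simp only [mem_filter, mem_univ, true_and]
    contrapose!
    intro hi
    exact ⟨h i (by omega), h (i + 1) (by have := i.val_add_one_le_succ; omega)⟩
  calc pairDist x y ≤ n - (k - 1) := (card_le_card hsub).trans_eq (Fin.card_filter_le_val n _)
    _ ≤ n + 1 - k := by omega

theorem card_le_pow_of_eq_of_forall_val_lt_eq {F : Type*} [Fintype F] {n k : ℕ} (hk : k ≤ n)
    (C : Finset (Fin n → F))
    (hC : ∀ x ∈ C, ∀ y ∈ C, (∀ i : Fin n, (i : ℕ) < k → x i = y i) → x = y) :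
    #C ≤ Fintype.card F ^ k := by
  calc #C ≤ #(univ : Finset (Fin k → F)) :=
        card_le_card_of_injOn (fun x i => x (Fin.castLE hk i)) (fun _ _ => mem_coe.2 (mem_univ _))
          fun x hx y hy hxy => hC x hx y hy fun i hi => congrFun hxy ⟨i, hi⟩
    _ = Fintype.card F ^ k := by simp

theorem stmt3_general {F : Type*} [Fintype F] [DecidableEq F] {n : ℕ} [NeZero n]
    (C : Finset (Fin n → F)) (d : ℕ)
    (hd2 : 2 ≤ d) (hdn : d ≤ n)
    (hmin : ∀ x ∈ C, ∀ y ∈ C, x ≠ y → d ≤ pairDist x y) :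
    C.card ≤ Fintype.card F ^ (n - d + 2) := by
  refine card_le_pow_of_eq_of_forall_val_lt_eq (by omega) C fun x hx y hy hagree => ?_
  by_contra hne
  have hle := pairDist_le_of_forall_val_lt_eq hagree
  have hge := hmin x hx y hy hne
  omega

/-- Singleton bound for symbol-pair codes. -/
theorem stmt3 {F : Type*} [Field F] [Fintype F] [DecidableEq F] {n : ℕ} [NeZero n]
    (hq : 2 ≤ Fintype.card F) (C : Finset (Fin n → F)) (d : ℕ)
    (hd2 : 2 ≤ d) (hdn : d ≤ n)
    (hmin : ∀ x ∈ C, ∀ y ∈ C, x ≠ y → d ≤ pairDist x y)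
    (hex : ∃ x ∈ C, ∃ y ∈ C, x ≠ y ∧ pairDist x y = d) :
    C.card ≤ Fintype.card F ^ (n - d + 2) :=
  stmt3_general C d hd2 hdn hmin
end

section
/- Let p be an odd prime with 3 | (p-1), let ω ∈ F_p be a primitive third root of unity, and let C be the cyclic code of length 3p over F_p with generator polynomial g(x) = (x-1)^4 (x-ω)^2 (x-ω^2)^2 dividing x^{3p} - 1. Then the minimum Hamming distance of C equals 5. -/
open Polynomial

/-- The cyclic code of length `n` over `F` with generator polynomial `g`
(with `g ∣ x^n - 1`), viewed as the set of coefficient vectors `c` whose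
associated polynomial is divisible by `g`. -/
def cyclicCode {F : Type*} [Field F] (n : ℕ) (g : Polynomial F) :
    Set (Fin n → F) :=
  {c | g ∣ ∑ i : Fin n, C (c i) * X ^ (i : ℕ)}

/-- Hamming weight of a vector. -/
def hammingWt {F : Type*} [Zero F] [DecidableEq F] {n : ℕ} (x : Fin n → F) : ℕ :=
  (Finset.univ.filter fun i => x i ≠ 0).card

/-!
The word `(X ^ 3 - 1) ^ 4 = X¹² - 4X⁹ + 6X⁶ - 4X³ + 1` is divisible by the generator and has
weight 5, since `4, 6 ≠ 0` in `𝔽_p` for `p ≥ 7`.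

Conversely, applying the Euler operator `θ = X d/dX` to a codeword `c = ∑ cᵢ Xⁱ` shows that a
root `a` of multiplicity `m` gives the moment conditions `∑ cᵢ iʲ aⁱ = 0` for `j < m`. At
`a = 1, ω, ω²` these combine, through the Vandermonde matrix of the cube roots of unity, into
`∑_{i ≡ r [3]} cᵢ iʲ = 0` for `j < 2` and each residue `r`. Inside one residue class modulo 3
the map `i ↦ i mod p` is injective (CRT), so a Vandermonde argument shows that every residue
class meeting the support of `c` meets it in at least 3 points. A support of size at most 4
therefore lies in one class, and there the four moments at `a = 1` force `c = 0`.
-/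

open Finset

section Moments

variable {F : Type*} [Field F] {ι : Type*} {s : Finset ι} {b x : ι → F} {m : ℕ}

theorem sum_mul_eval_eq_zero_of_forall_sum_mul_pow_eq_zero
    (h : ∀ j < m, ∑ i ∈ s, b i * x i ^ j = 0) {P : F[X]} (hP : P.natDegree < m) :
    ∑ i ∈ s, b i * P.eval (x i) = 0 := by
  simp_rw [eval_eq_sum_range' hP, mul_sum]
  rw [sum_comm]
  refine sum_eq_zero fun j hj => ?_
  calc ∑ i ∈ s, b i * (P.coeff j * x i ^ j) = P.coeff j * ∑ i ∈ s, b i * x i ^ j := by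
        rw [mul_sum]; exact sum_congr rfl fun i _ => by ring
    _ = 0 := by rw [h j (mem_range.mp hj), mul_zero]

theorem eq_zero_of_forall_sum_mul_pow_eq_zero [DecidableEq ι] (hx : Set.InjOn x s)
    (hs : #s ≤ m) (h : ∀ j < m, ∑ i ∈ s, b i * x i ^ j = 0) : ∀ i ∈ s, b i = 0 := by
  intro i hi
  set P : F[X] := ∏ k ∈ s.erase i, (X - C (x k))
  have hP : P.natDegree < m := by
    rw [natDegree_prod_of_monic _ _ fun k _ => monic_X_sub_C (x k)]
    simp only [natDegree_X_sub_C, sum_const, smul_eq_mul, mul_one, card_erase_of_mem hi]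
    have := card_pos.mpr ⟨i, hi⟩
    omega
  have hPi : P.eval (x i) ≠ 0 := by
    rw [eval_prod, prod_ne_zero_iff]
    intro k hk
    rw [eval_sub, eval_X, eval_C, sub_ne_zero]
    exact fun he => ne_of_mem_erase hk (hx (mem_of_mem_erase hk) hi he.symm)
  have hsum := sum_mul_eval_eq_zero_of_forall_sum_mul_pow_eq_zero h hP
  rw [← add_sum_erase s _ hi, sum_eq_zero fun k hk => ?_, add_zero] at hsum
  · exact (mul_eq_zero.mp hsum).resolve_right hPi
  · rw [eval_prod, prod_eq_zero hk (by rw [eval_sub, eval_X, eval_C, sub_self]), mul_zero]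

theorem lt_card_of_forall_sum_mul_pow_eq_zero [DecidableEq ι] (hx : Set.InjOn x s)
    (hb : ∀ i ∈ s, b i ≠ 0) (hs : s.Nonempty) (h : ∀ j < m, ∑ i ∈ s, b i * x i ^ j = 0) :
    m < #s := by
  by_contra! hle
  obtain ⟨i, hi⟩ := hs
  exact hb i hi (eq_zero_of_forall_sum_mul_pow_eq_zero hx hle h i hi)

end Moments

section EulerOperator

variable {R : Type*} [CommRing R]

local notation "θ" => fun q : R[X] => X * derivative q

theorem pow_dvd_X_mul_derivative {a : R} {k : ℕ} {Q : R[X]} (h : (X - C a) ^ (k + 1) ∣ Q) :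
    (X - C a) ^ k ∣ X * derivative Q := by
  obtain ⟨q, rfl⟩ := h
  refine ⟨X * (C ((k : R) + 1) * q + (X - C a) * derivative q), ?_⟩
  rw [derivative_mul, derivative_pow, derivative_sub, derivative_X, derivative_C,
    Nat.add_sub_cancel]
  push_cast
  ring

theorem pow_dvd_iterate_X_mul_derivative {a : R} {j k : ℕ} {Q : R[X]}
    (h : (X - C a) ^ (j + k) ∣ Q) : (X - C a) ^ k ∣ θ^[j] Q := by
  induction j generalizing Q with
  | zero => simpa using h
  | succ j ih =>
    rw [Function.iterate_succ_apply]
    exact ih (pow_dvd_X_mul_derivative (by rwa [add_right_comm] at h))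

theorem iterate_X_mul_derivative_sum {n : ℕ} (c : Fin n → R) (j : ℕ) :
    θ^[j] (∑ i : Fin n, C (c i) * X ^ (i : ℕ)) =
      ∑ i : Fin n, C (c i * (i : R) ^ j) * X ^ (i : ℕ) := by
  induction j with
  | zero => simp
  | succ j ih =>
    rw [Function.iterate_succ_apply', ih, derivative_sum, mul_sum]
    refine sum_congr rfl fun i _ => ?_
    rw [derivative_C_mul_X_pow]
    rcases Nat.eq_zero_or_eq_succ_pred (i : ℕ) with h0 | hsucc
    · simp [h0]
    · rw [hsucc, Nat.succ_sub_one, pow_succ' X, ← hsucc]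
      simp only [C_mul, C_pow, pow_succ]
      ring

theorem sum_mul_pow_mul_pow_eq_zero_of_pow_dvd {n m : ℕ} {c : Fin n → R} {a : R}
    (h : (X - C a) ^ m ∣ ∑ i : Fin n, C (c i) * X ^ (i : ℕ)) {j : ℕ} (hj : j < m) :
    ∑ i : Fin n, c i * (i : R) ^ j * a ^ (i : ℕ) = 0 := by
  have := pow_dvd_iterate_X_mul_derivative (k := 1) ((pow_dvd_pow _ hj).trans h)
  rw [pow_one, dvd_iff_isRoot, IsRoot, iterate_X_mul_derivative_sum, eval_finsetSum] at this
  simpa using this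

end EulerOperator

theorem IsPrimitiveRoot.sum_filter_mod_eq_zero {F ι : Type*} [Field F] {s : Finset ι}
    {f : ι → F} {e : ι → ℕ} {ω : F} {m : ℕ} (hω : IsPrimitiveRoot ω m)
    (h : ∀ k < m, ∑ i ∈ s, f i * (ω ^ k) ^ e i = 0) {r : ℕ} (hr : r < m) :
    ∑ i ∈ s with e i % m = r, f i = 0 := by
  have hm : 0 < m := r.zero_le.trans_lt hr
  refine eq_zero_of_forall_sum_mul_pow_eq_zero (s := range m) (x := (ω ^ ·))
    (b := fun r => ∑ i ∈ s with e i % m = r, f i)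
    (fun a ha b hb hab => hω.pow_inj (mem_range.mp ha) (mem_range.mp hb) hab)
    (card_range m).le (fun k hk => ?_) r (mem_range.mpr hr)
  calc ∑ r ∈ range m, (∑ i ∈ s with e i % m = r, f i) * (ω ^ r) ^ k
      = ∑ r ∈ range m, ∑ i ∈ s with e i % m = r, f i * (ω ^ k) ^ e i := by
        refine sum_congr rfl fun r _ => ?_
        rw [sum_mul]
        refine sum_congr rfl fun i hi => ?_
        rw [← (mem_filter.mp hi).2, hω.eq_orderOf, pow_mod_orderOf, ← pow_mul, ← pow_mul,
          mul_comm k]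
    _ = ∑ i ∈ s, f i * (ω ^ k) ^ e i :=
        sum_fiberwise_of_maps_to (fun i _ => mem_range.mpr (Nat.mod_lt _ hm)) _
    _ = 0 := h k hk

theorem Fin.natCast_injOn_mod_eq {R : Type*} [AddGroupWithOne R] {m p : ℕ} [CharP R p]
    (hmp : m.Coprime p) (r : ℕ) :
    Set.InjOn (fun i : Fin (m * p) => ((i : ℕ) : R)) {i | i % m = r} :=
  fun i hi j hj hij => Fin.ext <|
    ((Nat.modEq_and_modEq_iff_modEq_mul hmp).mp
      ⟨hi.trans hj.symm, (CharP.natCast_eq_natCast R p).mp hij⟩).eq_of_lt_of_lt i.2 j.2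

theorem five_le_card_of_sum_mul_pow_eq_zero {F ι κ : Type*} [Field F] [DecidableEq ι]
    [DecidableEq κ] {s : Finset ι} {b x : ι → F} (cls : ι → κ)
    (hx : ∀ r, Set.InjOn x {i | cls i = r}) (hb : ∀ i ∈ s, b i ≠ 0) (hs : s.Nonempty)
    (hmoment : ∀ j < 4, ∑ i ∈ s, b i * x i ^ j = 0)
    (hmoment_cls : ∀ i ∈ s, ∀ j < 2, ∑ k ∈ s with cls k = cls i, b k * x k ^ j = 0) :
    5 ≤ #s := by
  have hcls_card (i : ι) (hi : i ∈ s) : 2 < #{k ∈ s | cls k = cls i} :=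
    lt_card_of_forall_sum_mul_pow_eq_zero ((hx (cls i)).mono fun k hk => (mem_filter.mp hk).2)
      (fun k hk => hb k (mem_filter.mp hk).1) ⟨i, mem_filter.mpr ⟨hi, rfl⟩⟩ (hmoment_cls i hi)
  by_contra! hlt
  obtain ⟨i₀, hi₀⟩ := hs
  have hsame : ∀ i ∈ s, cls i = cls i₀ := by
    intro i hi
    by_contra hne
    have hdisj : Disjoint {k ∈ s | cls k = cls i} {k ∈ s | cls k = cls i₀} :=
      disjoint_filter.mpr fun k _ h h₀ => hne (h.symm.trans h₀)
    have hunion := card_le_card (union_subset (filter_subset (cls · = cls i) s)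
      (filter_subset (cls · = cls i₀) s))
    rw [card_union_of_disjoint hdisj] at hunion
    have := hcls_card i hi
    have := hcls_card i₀ hi₀
    omega
  exact hlt.not_ge (lt_card_of_forall_sum_mul_pow_eq_zero ((hx (cls i₀)).mono hsame) hb
    ⟨i₀, hi₀⟩ hmoment)

theorem five_le_hammingWt {F : Type*} [Field F] [DecidableEq F] {p : ℕ} [CharP F p]
    (hp : Nat.Coprime 3 p) {ω : F} (hω : IsPrimitiveRoot ω 3) {c : Fin (3 * p) → F}
    (hc : c ∈ cyclicCode (3 * p) ((X - 1) ^ 4 * (X - C ω) ^ 2 * (X - C (ω ^ 2)) ^ 2))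
    (hc0 : c ≠ 0) : 5 ≤ hammingWt c := by
  set s := univ.filter fun i => c i ≠ 0
  have hsum_support (f : Fin (3 * p) → F) : ∑ i ∈ s, c i * f i = ∑ i, c i * f i :=
    sum_filter_of_ne fun i _ hi hci => hi (by rw [hci, zero_mul])
  have hdvd_one : (X - C 1) ^ 4 ∣ ∑ i : Fin (3 * p), C (c i) * X ^ (i : ℕ) := by
    rw [C_1]; exact (dvd_mul_right _ _).trans ((dvd_mul_right _ _).trans hc)
  have hdvd_root :
      ∀ k < 3, (X - C (ω ^ k)) ^ 2 ∣ ∑ i : Fin (3 * p), C (c i) * X ^ (i : ℕ) := by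
    intro k hk
    interval_cases k
    · simpa using (pow_dvd_pow (X - C 1) (by norm_num : 2 ≤ 4)).trans hdvd_one
    · rw [pow_one]; exact (dvd_mul_left _ _).trans ((dvd_mul_right _ _).trans hc)
    · exact (dvd_mul_left _ _).trans hc
  refine five_le_card_of_sum_mul_pow_eq_zero (x := fun i => (i.val : F)) (·.val % 3)
    (Fin.natCast_injOn_mod_eq hp) (fun i hi => (mem_filter.mp hi).2) ?_
    (fun j hj => (hsum_support _).trans
      (by simpa using sum_mul_pow_mul_pow_eq_zero_of_pow_dvd hdvd_one hj))
    (fun i _ j hj => hω.sum_filter_mod_eq_zero (fun k hk => ?_) (Nat.mod_lt _ three_pos))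
  · obtain ⟨i, hi⟩ := Function.ne_iff.mp hc0
    exact ⟨i, mem_filter.mpr ⟨mem_univ i, hi⟩⟩
  · simp only [mul_assoc]
    exact (hsum_support _).trans (by simpa [mul_assoc] using
      sum_mul_pow_mul_pow_eq_zero_of_pow_dvd (hdvd_root k hk) hj)

section Codeword

variable {F : Type*} [Field F] {n : ℕ}

theorem sum_C_coeff_mul_X_pow_fin {q : F[X]} (hq : q.natDegree < n) :
    ∑ i : Fin n, C (q.coeff i) * X ^ (i : ℕ) = q :=
  (Fin.sum_univ_eq_sum_range (fun i => C (q.coeff i) * X ^ i) n).trans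
    (q.as_sum_range_C_mul_X_pow' hq).symm

theorem hammingWt_coeff [DecidableEq F] {q : F[X]} (hq : q.natDegree < n) :
    hammingWt (fun i : Fin n => q.coeff i) = #q.support := by
  rw [hammingWt, ← card_map Fin.valEmbedding]
  congr 1
  ext k
  simp only [mem_map, mem_filter, mem_univ, true_and, Fin.valEmbedding_apply, mem_support_iff]
  refine ⟨fun ⟨i, hi, hik⟩ => hik ▸ hi, fun hk => ⟨⟨k, ?_⟩, hk, rfl⟩⟩
  exact (le_natDegree_of_ne_zero hk).trans_lt hq

theorem support_X_pow_three_sub_one_pow_four (h4 : (4 : F) ≠ 0) (h6 : (6 : F) ≠ 0) :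
    ((X ^ 3 - 1) ^ 4 : F[X]).support = {0, 3, 6, 9, 12} := by
  have : ((X ^ 3 - 1) ^ 4 : F[X]) = X ^ 12 - C 4 * X ^ 9 + C 6 * X ^ 6 - C 4 * X ^ 3 + 1 := by
    simp only [map_ofNat]; ring
  ext k
  rw [this, mem_support_iff]
  simp only [coeff_add, coeff_sub, coeff_C_mul, coeff_X_pow, coeff_one]
  simp only [mem_insert, mem_singleton]
  by_cases hk : k = 0 ∨ k = 3 ∨ k = 6 ∨ k = 9 ∨ k = 12
  · rcases hk with rfl | rfl | rfl | rfl | rfl <;> simp [h4, h6]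
  · simp_all

end Codeword

theorem IsPrimitiveRoot.X_pow_three_sub_one_eq {F : Type*} [Field F] {ω : F}
    (hω : IsPrimitiveRoot ω 3) : (X ^ 3 - 1 : F[X]) = (X - 1) * (X - C ω) * (X - C (ω ^ 2)) := by
  have hsum : 1 + C ω + C ω ^ 2 = (0 : F[X]) := by
    simpa [sum_range_succ] using congrArg C (hω.geom_sum_eq_zero (by norm_num))
  have hcube : C ω ^ 3 = (1 : F[X]) := by rw [← C_pow, hω.pow_eq_one, C_1]
  rw [C_pow]
  linear_combination (X ^ 2 - X) * hsum + (1 - X) * hcube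

theorem exists_mem_cyclicCode_hammingWt_eq_five {F : Type*} [Field F] [DecidableEq F] {n : ℕ}
    (hn : 13 ≤ n) (h4 : (4 : F) ≠ 0) (h6 : (6 : F) ≠ 0) {ω : F} (hω : IsPrimitiveRoot ω 3) :
    ∃ c ∈ cyclicCode n ((X - 1) ^ 4 * (X - C ω) ^ 2 * (X - C (ω ^ 2)) ^ 2),
      c ≠ 0 ∧ hammingWt c = 5 := by
  have hdeg : ((X ^ 3 - 1) ^ 4 : F[X]).natDegree < n :=
    (natDegree_pow_le_of_le 4 (natDegree_sub_le_of_le (natDegree_X_pow_le 3)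
      natDegree_one.le)).trans_lt (by omega)
  have hwt : hammingWt (fun i : Fin n => ((X ^ 3 - 1) ^ 4 : F[X]).coeff i) = 5 := by
    rw [hammingWt_coeff hdeg, support_X_pow_three_sub_one_pow_four h4 h6]
    rfl
  refine ⟨_, ?_, fun h => ?_, hwt⟩
  · show _ ∣ ∑ i : Fin n, C (((X ^ 3 - 1) ^ 4 : F[X]).coeff i) * X ^ (i : ℕ)
    rw [sum_C_coeff_mul_X_pow_fin hdeg, hω.X_pow_three_sub_one_eq]
    exact ⟨(X - C ω) ^ 2 * (X - C (ω ^ 2)) ^ 2, by ring⟩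
  · rw [h] at hwt
    simp [hammingWt] at hwt

theorem stmt8_general (p : ℕ) [Fact p.Prime] (h3 : 3 ∣ p - 1)
    (ω : ZMod p) (hω3 : ω ^ 3 = 1) (hω1 : ω ≠ 1) :
    IsLeast {w : ℕ | ∃ c ∈ cyclicCode (3 * p)
        ((X - 1) ^ 4 * (X - C ω) ^ 2 * (X - C (ω ^ 2)) ^ 2),
      c ≠ 0 ∧ hammingWt c = w} 5 := by
  have hp : p.Prime := Fact.out
  have hp7 : 7 ≤ p := by
    by_contra! hlt
    interval_cases p <;> revert hp h3 <;> decide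
  have hω : IsPrimitiveRoot ω 3 := orderOf_eq_prime hω3 hω1 ▸ IsPrimitiveRoot.orderOf ω
  have hcast : ∀ k : ℕ, 0 < k → k < p → (k : ZMod p) ≠ 0 := fun k hk hkp =>
    (ZMod.natCast_eq_zero_iff k p).not.mpr (Nat.not_dvd_of_pos_of_lt hk hkp)
  refine ⟨exists_mem_cyclicCode_hammingWt_eq_five (by omega)
    (by exact_mod_cast hcast 4 (by norm_num) (by omega))
    (by exact_mod_cast hcast 6 (by norm_num) (by omega)) hω, ?_⟩
  rintro w ⟨c, hc, hc0, rfl⟩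
  exact five_le_hammingWt ((Nat.coprime_primes Nat.prime_three hp).mpr (by omega)) hω hc hc0

theorem stmt8 (p : ℕ) [Fact p.Prime] (hodd : Odd p) (h3 : 3 ∣ p - 1)
    (ω : ZMod p) (hω3 : ω ^ 3 = 1) (hω1 : ω ≠ 1) :
    IsLeast {w : ℕ | ∃ c ∈ cyclicCode (3 * p)
        ((X - 1) ^ 4 * (X - C ω) ^ 2 * (X - C (ω ^ 2)) ^ 2),
      c ≠ 0 ∧ hammingWt c = w} 5 :=
  stmt8_general p h3 ω hω3 hω1
end

section
/- Let p be an odd prime with 3 | (p-1), let ω ∈ F_p be a primitive third root of unity, and let C be the cyclic code of length 3p over F_p with generator polynomial g(x) = (x-1)^4 (x-ω)^2 (x-ω^2)^2. Then C has dimension 3p - 8 and minimum symbol-pair distance 10; in particular C is an MDS symbol-pair code, achieving the Singleton bound |C| = p^{3p - d_p + 2}. -/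
open Polynomial

/-- Symbol-pair weight of a vector (indices mod n). -/
def pairWt {F : Type*} [Zero F] [DecidableEq F] {n : ℕ} [NeZero n] (x : Fin n → F) : ℕ :=
  (Finset.univ.filter fun i : Fin n => ¬(x i = 0 ∧ x (i + 1) = 0)).card

set_option linter.unusedSectionVars false
set_option linter.unusedVariables false
set_option linter.unnecessarySimpa false

namespace Stmt9Aux
open Finset
variable {F : Type*} [Field F]

noncomputable def pv {n : ℕ} (c : Fin n → F) : F[X] := ∑ i : Fin n, C (c i) * X ^ (i : ℕ)

lemma pv_coeff {n : ℕ} (c : Fin n → F) (j : ℕ) :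
    (pv c).coeff j = if h : j < n then c ⟨j, h⟩ else 0 := by
  rw [pv, finset_sum_coeff]
  split_ifs with h
  · rw [Finset.sum_eq_single (⟨j, h⟩ : Fin n)]
    · simp
    · intro b _ hb
      rw [coeff_C_mul, coeff_X_pow, if_neg, mul_zero]
      exact fun hc => hb (Fin.ext hc.symm)
    · simp
  · apply Finset.sum_eq_zero
    intro b _
    rw [coeff_C_mul, coeff_X_pow, if_neg, mul_zero]
    exact fun hc => h (hc ▸ b.isLt)

lemma pv_degree_lt {n : ℕ} (c : Fin n → F) : (pv c).degree < n := by
  rcases eq_or_ne (pv c) 0 with h | h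
  · rw [h, degree_zero]; exact WithBot.bot_lt_coe n
  · rw [degree_lt_iff_coeff_zero]
    intro m hm
    rw [pv_coeff, dif_neg]
    exact fun hc => absurd hm (by exact_mod_cast not_le.2 hc)

lemma pv_of_poly {n : ℕ} (f : F[X]) (hf : f.degree < n) :
    pv (fun i : Fin n => f.coeff i) = f := by
  ext j
  rw [pv_coeff]
  split_ifs with h
  · rfl
  · exact (coeff_eq_zero_of_degree_lt (lt_of_lt_of_le hf (by exact_mod_cast not_lt.1 h))).symm

lemma deg_mul_lt {n : ℕ} (g : F[X]) (hg : g.Monic) (hdeg : g.natDegree ≤ n)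
    (q : Fin (n - g.natDegree) → F) : (g * pv q).degree < n := by
  rcases eq_or_ne (pv q) 0 with h | h
  · rw [h, mul_zero, degree_zero]; exact WithBot.bot_lt_coe n
  · calc (g * pv q).degree = g.degree + (pv q).degree := degree_mul
      _ < g.natDegree + (n - g.natDegree : ℕ) := by
          apply WithBot.add_lt_add_of_le_of_lt (by simp [hg.ne_zero])
          · exact le_of_eq (degree_eq_natDegree hg.ne_zero)
          · exact pv_degree_lt q
      _ = (n : WithBot ℕ) := by
          rw [← Nat.cast_add, Nat.add_sub_cancel' hdeg]

/-- the bijection between the code and `Fin (n - deg g) → F`. -/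
noncomputable def codeEquiv {n : ℕ} (g : F[X]) (hg : g.Monic) (hdeg : g.natDegree ≤ n) :
    {c : Fin n → F // g ∣ pv c} ≃ (Fin (n - g.natDegree) → F) where
  toFun c := fun j => ((pv c.1) /ₘ g).coeff j
  invFun q := ⟨fun i => (g * pv q).coeff i, by
    rw [pv_of_poly _ (deg_mul_lt g hg hdeg q)]
    exact Dvd.intro _ rfl⟩
  left_inv c := by
    have h1 : g * (pv c.1 /ₘ g) = pv c.1 := by
      have := modByMonic_add_div (pv c.1) g
      rwa [(modByMonic_eq_zero_iff_dvd hg).2 c.2, zero_add] at this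
    have hdq : (pv c.1 /ₘ g).degree < (n - g.natDegree : ℕ) := by
      rcases eq_or_ne (pv c.1 /ₘ g) 0 with h | h
      · rw [h, degree_zero]; exact WithBot.bot_lt_coe _
      · have hpc : pv c.1 ≠ 0 := by
          rw [← h1]; exact mul_ne_zero hg.ne_zero h
        rw [← natDegree_lt_iff_degree_lt h]
        have h2 : (pv c.1).natDegree < n := (natDegree_lt_iff_degree_lt hpc).2 (pv_degree_lt c.1)
        rw [← h1, natDegree_mul hg.ne_zero h] at h2
        omega
    have h2 : pv (fun j : Fin (n - g.natDegree) => (pv c.1 /ₘ g).coeff j) = pv c.1 /ₘ g :=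
      pv_of_poly _ hdq
    apply Subtype.ext
    funext i
    show (g * pv fun j : Fin (n - g.natDegree) => (pv c.1 /ₘ g).coeff j).coeff (i : ℕ) = c.1 i
    rw [h2, h1, pv_coeff, dif_pos i.isLt, Fin.eta]
  right_inv q := by
    funext j
    show ((pv fun i : Fin n => (g * pv q).coeff i) /ₘ g).coeff (j : ℕ) = q j
    rw [pv_of_poly _ (deg_mul_lt g hg hdeg q), mul_divByMonic_cancel_left _ hg, pv_coeff,
      dif_pos j.isLt, Fin.eta]



lemma dvd_derivative_of_pow_succ_dvd {e : F} {t : ℕ} {q : F[X]}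
    (h : (X - C e) ^ (t + 1) ∣ q) : (X - C e) ^ t ∣ derivative q := by
  obtain ⟨u, rfl⟩ := h
  rw [derivative_mul, derivative_pow, derivative_sub, derivative_X, derivative_C, sub_zero]
  refine dvd_add (Dvd.dvd.mul_right ?_ u) (Dvd.dvd.mul_right ?_ _)
  · simp only [mul_one]
    exact Dvd.dvd.mul_left (pow_dvd_pow _ (Nat.le_refl _)) _
  · exact pow_dvd_pow _ (Nat.le_succ t)

lemma dvd_iterate_derivative {e : F} {m k : ℕ} {f : F[X]} (h : (X - C e) ^ m ∣ f) (hk : k ≤ m) :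
    (X - C e) ^ (m - k) ∣ derivative^[k] f := by
  induction k with
  | zero => simpa using h
  | succ k ih =>
      have h1 : (X - C e) ^ (m - k) ∣ derivative^[k] f := ih (Nat.le_of_succ_le hk)
      have h2 : m - k = (m - (k+1)) + 1 := by omega
      rw [Function.iterate_succ_apply']
      exact dvd_derivative_of_pow_succ_dvd (h2 ▸ h1)

lemma moment_eq_zero {n : ℕ} (c : Fin n → F) (e : F) {m k : ℕ}
    (h : (X - C e) ^ m ∣ pv c) (hk : k < m) :
    ∑ i : Fin n, c i * ((i : ℕ).descFactorial k : F) * e ^ (i : ℕ) = 0 := by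
  have hd : (X - C e) ∣ derivative^[k] (pv c) := by
    refine dvd_trans (dvd_pow_self _ (by omega : m - k ≠ 0)) (dvd_iterate_derivative h hk.le)
  have heval : eval e (derivative^[k] (pv c)) = 0 := by
    obtain ⟨u, hu⟩ := hd
    rw [hu, eval_mul, eval_sub, eval_X, eval_C, sub_self, zero_mul]
  have hform : derivative^[k] (pv c) =
      ∑ i : Fin n, C (c i) * (((i : ℕ).descFactorial k : F[X]) * X ^ ((i : ℕ) - k)) := by
    rw [pv, iterate_derivative_sum]
    refine Finset.sum_congr rfl fun i _ => ?_
    rw [iterate_derivative_C_mul, iterate_derivative_X_pow_eq_natCast_mul]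
  rw [hform, eval_finset_sum] at heval
  simp only [eval_mul, eval_C, eval_pow, eval_X, eval_natCast] at heval
  have := congrArg (· * e ^ k) heval
  simp only [zero_mul, Finset.sum_mul] at this
  rw [← this]
  refine (Finset.sum_congr rfl fun i _ => ?_).symm
  rcases le_or_gt k (i : ℕ) with hki | hki
  · rw [mul_assoc, mul_assoc, ← pow_add, Nat.sub_add_cancel hki, ← mul_assoc]
  · rw [Nat.descFactorial_eq_zero_iff_lt.2 hki]
    push_cast
    ring

lemma desc1_cast (i : ℕ) : ((i.descFactorial 1 : ℕ) : F) = (i : F) := by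
  simp [Nat.descFactorial]

lemma desc2_cast (i : ℕ) : ((i.descFactorial 2 : ℕ) : F) = (i : F) ^ 2 - i := by
  rcases i with _ | j
  · simp
  · simp only [Nat.descFactorial]
    push_cast
    ring

lemma desc3_cast (i : ℕ) : ((i.descFactorial 3 : ℕ) : F) = (i:F)^3 - 3*(i:F)^2 + 2*i := by
  rcases i with _ | _ | j
  · simp
  · simp [Nat.descFactorial]; ring
  · simp only [Nat.descFactorial]
    push_cast
    ring

lemma epow (e : F) (he : e ^ 3 = 1) (i : ℕ) : e ^ i = e ^ (i % 3) := by
  conv_lhs => rw [← Nat.div_add_mod i 3, pow_add, pow_mul, he, one_pow]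
  exact one_mul _

lemma solve3 {ω S0 S1 S2 : F} (hω3 : ω ^ 3 = 1) (hω1 : ω ≠ 1) (h2 : (2:F) ≠ 0) (h3 : (3:F) ≠ 0)
    (E1 : S0 + S1 + S2 = 0) (E2 : S0 + ω * S1 + ω ^ 2 * S2 = 0)
    (E3 : S0 + ω ^ 2 * S1 + (ω ^ 2) ^ 2 * S2 = 0) :
    S0 = 0 ∧ S1 = 0 ∧ S2 = 0 := by
  have hω0 : ω ≠ 0 := by
    intro h; rw [h] at hω3; simpa using hω3
  have hsum : ω ^ 2 + ω + 1 = 0 := by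
    have h := mul_eq_zero.mp (show (ω - 1) * (ω ^ 2 + ω + 1) = 0 by linear_combination hω3)
    exact h.resolve_left (sub_ne_zero.2 hω1)
  have key : (-3 : F) * (S1 + S2) = 0 := by
    linear_combination E2 + E3 - 2 * E1 - (S1 + S2) * hsum - S2 * ω * hω3
  have hs12 : S1 + S2 = 0 :=
    (mul_eq_zero.mp key).resolve_left (by simpa using h3)
  have key2 : (ω - ω ^ 2) * (S1 - S2) = 0 := by
    linear_combination E2 - E3 + S2 * ω * hω3
  have hωω : ω - ω ^ 2 ≠ 0 := by
    intro h
    have : ω * (1 - ω) = 0 := by linear_combination h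
    rcases mul_eq_zero.mp this with h' | h'
    · exact hω0 h'
    · exact hω1 (by linear_combination -h')
  have hs12' : S1 - S2 = 0 := (mul_eq_zero.mp key2).resolve_left hωω
  have hS1 : S1 = 0 := by
    have : (2:F) * S1 = 0 := by linear_combination hs12 + hs12'
    exact (mul_eq_zero.mp this).resolve_left h2
  have hS2 : S2 = 0 := by linear_combination hs12 - hS1
  exact ⟨by linear_combination E1 - hS1 - hS2, hS1, hS2⟩

lemma vand_card {ι : Type*} [DecidableEq ι] {T : Finset ι} {x a : ι → F}
    (hinj : Set.InjOn x T)
    (h : ∀ k < T.card, ∑ i ∈ T, a i * x i ^ k = 0) :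
    ∀ i ∈ T, a i = 0 := by
  classical
  set m := T.card with hm
  let e : Fin m ≃ {y // y ∈ T} := T.equivFin.symm
  have hx : Function.Injective fun j : Fin m => x (e j) := by
    intro j j' hjj
    exact e.injective (Subtype.ext (hinj (e j).2 (e j').2 hjj))
  have hsum : ∀ i : Fin m, (∑ j : Fin m, a (e j) * (x (e j)) ^ (i : ℕ)) = 0 := by
    intro i
    exact (Equiv.sum_comp e (fun y : {y // y ∈ T} => a y.1 * (x y.1) ^ (i : ℕ))).trans
      ((Finset.sum_coe_sort T (fun y => a y * x y ^ (i : ℕ))).trans (h i i.isLt))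
  have hz := Matrix.eq_zero_of_forall_pow_sum_mul_pow_eq_zero hx hsum
  intro i hi
  have := congrFun hz (e.symm ⟨i, hi⟩)
  simpa using this

lemma moments_kill {ι : Type*} [DecidableEq ι] {T : Finset ι} {x a : ι → F} {t : ℕ}
    (hinj : Set.InjOn x T) (hne : T.Nonempty)
    (hnz : ∀ i ∈ T, a i ≠ 0)
    (h : ∀ k < t, ∑ i ∈ T, a i * x i ^ k = 0) :
    t < T.card := by
  by_contra hle
  push_neg at hle
  obtain ⟨i, hi⟩ := hne
  exact hnz i hi (vand_card hinj (fun k hk => h k (lt_of_lt_of_le hk hle)) i hi)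



lemma mono0 {n : ℕ} {c : Fin n → F} {e : F} {m : ℕ} (h : (X - C e) ^ m ∣ pv c) (hm : 1 ≤ m) :
    ∑ i : Fin n, c i * e ^ (i : ℕ) = 0 := by
  have := moment_eq_zero c e h (by omega : 0 < m)
  simpa [Nat.descFactorial] using this

lemma mono1 {n : ℕ} {c : Fin n → F} {e : F} {m : ℕ} (h : (X - C e) ^ m ∣ pv c) (hm : 2 ≤ m) :
    ∑ i : Fin n, c i * ((i : ℕ) : F) * e ^ (i : ℕ) = 0 := by
  have := moment_eq_zero c e h (by omega : 1 < m)
  simpa [desc1_cast] using this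

lemma mono2 {n : ℕ} {c : Fin n → F} {e : F} {m : ℕ} (h : (X - C e) ^ m ∣ pv c) (hm : 3 ≤ m) :
    ∑ i : Fin n, c i * ((i : ℕ) : F) ^ 2 * e ^ (i : ℕ) = 0 := by
  have hh2 := moment_eq_zero c e h (by omega : 2 < m)
  have hh1 := moment_eq_zero c e h (by omega : 1 < m)
  have hsp : ∑ i : Fin n, c i * ((i : ℕ) : F) ^ 2 * e ^ (i : ℕ)
      = (∑ i : Fin n, c i * (((i:ℕ).descFactorial 2 : ℕ) : F) * e ^ (i:ℕ))
        + ∑ i : Fin n, c i * (((i:ℕ).descFactorial 1 : ℕ) : F) * e ^ (i:ℕ) := by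
    rw [← Finset.sum_add_distrib]
    exact Finset.sum_congr rfl fun i _ => by rw [desc2_cast, desc1_cast]; ring
  rw [hsp, hh2, hh1, add_zero]

lemma mono3 {n : ℕ} {c : Fin n → F} {e : F} {m : ℕ} (h : (X - C e) ^ m ∣ pv c) (hm : 4 ≤ m) :
    ∑ i : Fin n, c i * ((i : ℕ) : F) ^ 3 * e ^ (i : ℕ) = 0 := by
  have hh3 := moment_eq_zero c e h (by omega : 3 < m)
  have hh2 := moment_eq_zero c e h (by omega : 2 < m)
  have hh1 := moment_eq_zero c e h (by omega : 1 < m)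
  have hsp : ∑ i : Fin n, c i * ((i : ℕ) : F) ^ 3 * e ^ (i : ℕ)
      = (∑ i : Fin n, c i * (((i:ℕ).descFactorial 3 : ℕ) : F) * e ^ (i:ℕ))
        + (3 * ∑ i : Fin n, c i * (((i:ℕ).descFactorial 2 : ℕ) : F) * e ^ (i:ℕ)
        + ∑ i : Fin n, c i * (((i:ℕ).descFactorial 1 : ℕ) : F) * e ^ (i:ℕ)) := by
    rw [Finset.mul_sum, ← Finset.sum_add_distrib, ← Finset.sum_add_distrib]
    exact Finset.sum_congr rfl fun i _ => by rw [desc3_cast, desc2_cast, desc1_cast]; ring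
  rw [hsp, hh3, hh2, hh1]
  ring

lemma split_res {n : ℕ} (f : Fin n → F) (e : F) (he : e ^ 3 = 1) :
    ∑ i : Fin n, f i * e ^ (i : ℕ) =
      ∑ r ∈ Finset.range 3, e ^ r *
        ∑ i ∈ univ.filter (fun i : Fin n => (i : ℕ) % 3 = r), f i := by
  rw [← Finset.sum_fiberwise_of_maps_to (g := fun i : Fin n => (i : ℕ) % 3) (t := Finset.range 3)
    (fun i _ => Finset.mem_range.2 (Nat.mod_lt _ (by norm_num))) (fun i => f i * e ^ (i : ℕ))]
  refine Finset.sum_congr rfl fun r hr => ?_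
  rw [Finset.mul_sum]
  refine Finset.sum_congr rfl fun i hi => ?_
  have hm : (i : ℕ) % 3 = r := (Finset.mem_filter.1 hi).2
  rw [epow e he, hm, mul_comm]

lemma res_big {n : ℕ} (f : Fin n → F) {r : ℕ} (hr : 3 ≤ r) :
    univ.filter (fun i : Fin n => (i : ℕ) % 3 = r) = ∅ := by
  refine Finset.filter_false_of_mem fun i _ => ?_
  have := Nat.mod_lt (i : ℕ) (show 0 < 3 by norm_num)
  omega

lemma conditions {n : ℕ} {ω : F} (hω3 : ω ^ 3 = 1) (hω1 : ω ≠ 1)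
    (h2 : (2 : F) ≠ 0) (h3 : (3 : F) ≠ 0) {c : Fin n → F}
    (h : ((X - 1) ^ 4 * (X - C ω) ^ 2 * (X - C (ω ^ 2)) ^ 2 : F[X]) ∣ pv c) :
    (∀ r, ∑ i ∈ univ.filter (fun i : Fin n => (i : ℕ) % 3 = r), c i = 0) ∧
    (∀ r, ∑ i ∈ univ.filter (fun i : Fin n => (i : ℕ) % 3 = r), c i * ((i : ℕ) : F) = 0) ∧
    (∑ i : Fin n, c i * ((i : ℕ) : F) ^ 2 = 0) ∧
    (∑ i : Fin n, c i * ((i : ℕ) : F) ^ 3 = 0) := by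
  have hω0 : ω ≠ 0 := fun hh => by rw [hh] at hω3; simp at hω3
  have hω23 : (ω ^ 2) ^ 3 = 1 := by rw [← pow_mul, mul_comm, pow_mul, hω3, one_pow]
  have hω21 : ω ^ 2 ≠ 1 := by
    intro hh
    have : ω = 1 := by
      have : ω * ω ^ 2 = ω ^ 3 := by ring
      rw [hh, hω3, mul_one] at this
      exact this
    exact hω1 this
  have h1 : (X - C (1:F)) ^ 4 ∣ pv c :=
    dvd_trans ⟨(X - C ω) ^ 2 * (X - C (ω ^ 2)) ^ 2, by rw [C_1]; ring⟩ h
  have hdω : (X - C ω) ^ 2 ∣ pv c :=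
    dvd_trans ⟨(X - 1) ^ 4 * (X - C (ω ^ 2)) ^ 2, by ring⟩ h
  have hdω2 : (X - C (ω ^ 2)) ^ 2 ∣ pv c :=
    dvd_trans ⟨(X - 1) ^ 4 * (X - C ω) ^ 2, by ring⟩ h
  have h1' : (X - C (1:F)) ^ 2 ∣ pv c := dvd_trans (pow_dvd_pow _ (by norm_num)) h1
  -- k = 0 system
  have E0 : ∀ e : F, e ^ 3 = 1 → (X - C e) ^ 2 ∣ pv c →
      (∑ i ∈ univ.filter (fun i : Fin n => (i:ℕ) % 3 = 0), c i)
      + e * (∑ i ∈ univ.filter (fun i : Fin n => (i:ℕ) % 3 = 1), c i)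
      + e ^ 2 * (∑ i ∈ univ.filter (fun i : Fin n => (i:ℕ) % 3 = 2), c i) = 0 := by
    intro e he hd
    have := (split_res c e he).symm.trans (mono0 hd (by norm_num))
    rw [Finset.sum_range_succ, Finset.sum_range_succ, Finset.sum_range_one] at this
    rw [pow_zero, one_mul, pow_one] at this
    exact this
  obtain ⟨hS0, hS1, hS2⟩ := solve3 hω3 hω1 h2 h3 (by simpa using E0 1 (one_pow 3) h1')
    (E0 ω hω3 hdω) (E0 (ω ^ 2) hω23 hdω2)
  -- k = 1 system
  have E1 : ∀ e : F, e ^ 3 = 1 → (X - C e) ^ 2 ∣ pv c →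
      (∑ i ∈ univ.filter (fun i : Fin n => (i:ℕ) % 3 = 0), c i * ((i:ℕ) : F))
      + e * (∑ i ∈ univ.filter (fun i : Fin n => (i:ℕ) % 3 = 1), c i * ((i:ℕ) : F))
      + e ^ 2 * (∑ i ∈ univ.filter (fun i : Fin n => (i:ℕ) % 3 = 2), c i * ((i:ℕ) : F)) = 0 := by
    intro e he hd
    have hmono : ∑ i : Fin n, (c i * ((i:ℕ) : F)) * e ^ (i : ℕ) = 0 := by
      have := mono1 hd le_rfl
      refine Eq.trans ?_ this
      exact Finset.sum_congr rfl fun i _ => by ring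
    have := (split_res (fun i => c i * ((i:ℕ) : F)) e he).symm.trans hmono
    rw [Finset.sum_range_succ, Finset.sum_range_succ, Finset.sum_range_one] at this
    rw [pow_zero, one_mul, pow_one] at this
    exact this
  obtain ⟨hT0, hT1, hT2⟩ := solve3 hω3 hω1 h2 h3 (by simpa using E1 1 (one_pow 3) h1')
    (E1 ω hω3 hdω) (E1 (ω ^ 2) hω23 hdω2)
  refine ⟨?_, ?_, ?_, ?_⟩
  · intro r
    match r with
    | 0 => exact hS0
    | 1 => exact hS1
    | 2 => exact hS2
    | (r+3) => rw [res_big (F := F) c (by omega)]; exact Finset.sum_empty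
  · intro r
    match r with
    | 0 => exact hT0
    | 1 => exact hT1
    | 2 => exact hT2
    | (r+3) => rw [res_big (F := F) (fun i : Fin n => c i * ((i:ℕ) : F)) (by omega)]
               exact Finset.sum_empty
  · have := mono2 h1 (by norm_num)
    simpa using this
  · have := mono3 h1 le_rfl
    
    simpa using this



section LB
variable {p : ℕ} [Fact p.Prime]
open Fin.NatCast Fin.CommRing

theorem lower_bound (hp7 : 7 ≤ p) {ω : ZMod p}
    (hω3 : ω ^ 3 = 1) (hω1 : ω ≠ 1)
    {c : Fin (3 * p) → ZMod p} (hc : c ≠ 0)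
    [NeZero (3 * p)]
    (h : ((X - 1) ^ 4 * (X - C ω) ^ 2 * (X - C (ω ^ 2)) ^ 2 : (ZMod p)[X]) ∣ pv c) :
    10 ≤ pairWt c := by
  classical
  have hpp : p.Prime := Fact.out
  have hn21 : 21 ≤ 3 * p := by omega
  have hchar2 : (2 : ZMod p) ≠ 0 := by
    intro hh
    have h2' : ((2:ℕ) : ZMod p) = 0 := by exact_mod_cast hh
    have := Nat.le_of_dvd (by norm_num) ((ZMod.natCast_eq_zero_iff 2 p).1 h2')
    omega
  have hchar3 : (3 : ZMod p) ≠ 0 := by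
    have hnd : ¬ (p ∣ 3) := fun hd => by have := Nat.le_of_dvd (by norm_num) hd; omega
    intro hh
    exact hnd ((ZMod.natCast_eq_zero_iff 3 p).1 (by exact_mod_cast hh))
  obtain ⟨hA, hB, hC, hD⟩ := conditions hω3 hω1 hchar2 hchar3 h
  set S : Finset (Fin (3 * p)) := Finset.univ.filter (fun i => c i ≠ 0) with hSdef
  set Bs : Finset (Fin (3 * p)) := Finset.univ.filter (fun i => c i = 0 ∧ c (i + 1) ≠ 0) with hBdef
  have memS : ∀ i : Fin (3 * p), i ∈ S ↔ c i ≠ 0 := by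
    intro i; simp [hSdef]
  have memB : ∀ i : Fin (3 * p), i ∈ Bs ↔ (c i = 0 ∧ c (i + 1) ≠ 0) := by
    intro i; simp [hBdef]
  have f0 : pairWt c = S.card + Bs.card := by
    rw [pairWt, ← Finset.card_union_of_disjoint]
    · congr 1
      ext i
      simp only [Finset.mem_union, memS i, memB i, Finset.mem_filter, Finset.mem_univ, true_and]
      tauto
    · rw [Finset.disjoint_left]
      intro i hi hi2
      rw [memS i] at hi
      rw [memB i] at hi2
      exact hi hi2.1
  -- arithmetic helpers on Fin (3 * p)
  have v1 : ∀ j : Fin (3 * p), ((j + 1 : Fin (3 * p)) : ℕ) % 3 = ((j : ℕ) + 1) % 3 := by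
    intro j
    have h1 : ((1 : Fin (3 * p)) : ℕ) = 1 := by
      rw [Fin.val_one']
      exact Nat.mod_eq_of_lt (by omega)
    rw [Fin.add_def, h1, Nat.mod_mod_of_dvd _ ⟨p, rfl⟩]
  have castmod : ∀ x : ℕ, ((x % (3 * p) : ℕ) : ZMod p) = (x : ZMod p) := by
    intro x
    conv_rhs => rw [← Nat.div_add_mod x (3 * p)]
    push_cast [ZMod.natCast_self]
    ring
  have v2 : ∀ j : Fin (3 * p), (((j + 1 : Fin (3 * p)) : ℕ) : ZMod p) = ((j : ℕ) : ZMod p) + 1 := by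
    intro j
    have h1 : ((1 : Fin (3 * p)) : ℕ) = 1 := by
      rw [Fin.val_one']; exact Nat.mod_eq_of_lt (by omega)
    rw [Fin.add_def, h1, castmod]
    push_cast
    ring
  have vinj : ∀ i j : Fin (3 * p), (i : ℕ) % 3 = (j : ℕ) % 3 →
      (((i : ℕ) : ZMod p) = ((j : ℕ) : ZMod p)) → i = j := by
    intro i j h3 hp'
    have hmp : (i : ℕ) ≡ (j : ℕ) [MOD p] := (ZMod.natCast_eq_natCast_iff _ _ _).1 hp'
    have hm3 : (i : ℕ) ≡ (j : ℕ) [MOD 3] := by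
      unfold Nat.ModEq
      omega
    have hcop : Nat.Coprime 3 p := by
      rw [Nat.coprime_primes (by norm_num) hpp]
      omega
    have hmn : (i : ℕ) ≡ (j : ℕ) [MOD 3 * p] :=
      (Nat.modEq_and_modEq_iff_modEq_mul hcop).1 ⟨hm3, hmp⟩
    have hi := i.isLt
    have hj := j.isLt
    unfold Nat.ModEq at hmn
    rw [Nat.mod_eq_of_lt hi, Nat.mod_eq_of_lt hj] at hmn
    exact Fin.ext hmn
  -- sums restricted to support
  have momS : ∀ (f : Fin (3 * p) → ZMod p) (r : ℕ),
      ∑ i ∈ Finset.univ.filter (fun i : Fin (3 * p) => (i : ℕ) % 3 = r), c i * f i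
      = ∑ i ∈ S.filter (fun i : Fin (3 * p) => (i : ℕ) % 3 = r), c i * f i := by
    intro f r
    refine (Finset.sum_subset ?_ ?_).symm
    · intro i hi
      simp only [Finset.mem_filter, Finset.mem_univ, true_and] at hi ⊢
      exact hi.2
    · intro i hi hni
      simp only [Finset.mem_filter, Finset.mem_univ, true_and, memS i] at hi hni
      have : c i = 0 := by
        by_contra hcc
        exact hni ⟨by simpa [hSdef] using hcc, hi⟩
      rw [this, zero_mul]
  have sumS : ∀ f : Fin (3 * p) → ZMod p, ∑ i : Fin (3 * p), c i * f i = ∑ i ∈ S, c i * f i := by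
    intro f
    refine (Finset.sum_subset (Finset.subset_univ S) ?_).symm
    intro i _ hni
    rw [memS i] at hni
    push_neg at hni
    rw [hni, zero_mul]
  have momT01 : ∀ (r k : ℕ), k < 2 →
      ∑ i ∈ S.filter (fun i : Fin (3 * p) => (i : ℕ) % 3 = r), c i * ((i : ℕ) : ZMod p) ^ k = 0 := by
    intro r k hk
    interval_cases k
    · rw [← momS (fun i => ((i : ℕ) : ZMod p) ^ 0) r]
      have := hA r
      refine Eq.trans ?_ this
      exact Finset.sum_congr rfl fun i _ => by rw [pow_zero, mul_one]
    · rw [← momS (fun i => ((i : ℕ) : ZMod p) ^ 1) r]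
      have := hB r
      refine Eq.trans ?_ this
      exact Finset.sum_congr rfl fun i _ => by rw [pow_one]
  have hSne : S.Nonempty := by
    by_contra hemp
    rw [Finset.not_nonempty_iff_eq_empty] at hemp
    apply hc
    funext i
    have : i ∉ S := by rw [hemp]; exact Finset.notMem_empty i
    rw [memS i] at this
    push_neg at this
    exact this
  -- nonzero values on S
  have hnzS : ∀ i ∈ S, c i ≠ 0 := fun i hi => (memS i).1 hi
  -- injectivity of cast on fixed-residue subsets of S
  have hinjres : ∀ r : ℕ, Set.InjOn (fun i : Fin (3 * p) => ((i : ℕ) : ZMod p))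
      ↑(S.filter (fun i : Fin (3 * p) => (i : ℕ) % 3 = r)) := by
    intro r i hi j hj hij
    simp only [Finset.coe_filter, Set.mem_setOf_eq] at hi hj
    exact vinj i j (hi.2.trans hj.2.symm) hij
  -- each nonempty residue class has ≥ 3 support elements
  have hw3 : ∀ r : ℕ, (S.filter (fun i : Fin (3 * p) => (i : ℕ) % 3 = r)).Nonempty →
      3 ≤ (S.filter (fun i : Fin (3 * p) => (i : ℕ) % 3 = r)).card := by
    intro r hne
    have := moments_kill (t := 2) (hinjres r) hne
      (fun i hi => hnzS i (Finset.mem_filter.1 hi).1)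
      (fun k hk => momT01 r k hk)
    omega

  -- CASE 1: single residue class
  have single : ∀ r : ℕ, r < 3 → (∀ i ∈ S, (i : ℕ) % 3 = r) → 10 ≤ pairWt c := by
    intro r hr hsub
    have hTS : S.filter (fun i : Fin (3 * p) => (i : ℕ) % 3 = r) = S :=
      Finset.filter_true_of_mem hsub
    have hmom : ∀ k < 4, ∑ i ∈ S, c i * ((i : ℕ) : ZMod p) ^ k = 0 := by
      intro k hk
      interval_cases k
      · rw [← hTS]; exact momT01 r 0 (by norm_num)
      · rw [← hTS]; exact momT01 r 1 (by norm_num)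
      · rw [← sumS (fun i => ((i : ℕ) : ZMod p) ^ 2)]; exact hC
      · rw [← sumS (fun i => ((i : ℕ) : ZMod p) ^ 3)]; exact hD
    have hinjS : Set.InjOn (fun i : Fin (3 * p) => ((i : ℕ) : ZMod p)) ↑S := by
      intro i hi j hj hij
      exact vinj i j ((hsub i (Finset.mem_coe.1 hi)).trans (hsub j (Finset.mem_coe.1 hj)).symm) hij
    have h5 : 5 ≤ S.card := by
      have := moments_kill (t := 4) hinjS hSne hnzS hmom
      omega
    have hmap : ∀ i ∈ S, (i - 1) ∈ Bs := by
      intro i hi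
      rw [memB]
      constructor
      · by_contra hne0
        have hmem : (i - 1) ∈ S := (memS _).2 hne0
        have hres := hsub _ hmem
        have hres2 := hsub i hi
        have hv := v1 (i - 1)
        rw [sub_add_cancel] at hv
        omega
      · rw [sub_add_cancel]
        exact hnzS i hi
    have hcard : S.card ≤ Bs.card := by
      apply Finset.card_le_card_of_injOn (fun i => i - 1) hmap
      intro x _ y _ hxy
      have := congrArg (fun u => u + (1 : Fin (3 * p))) hxy
      simpa [sub_add_cancel] using this
    omega
  -- CASE 3: all three residue classes
  have allthree :
      (∀ r : ℕ, r < 3 → (S.filter (fun i : Fin (3 * p) => (i : ℕ) % 3 = r)).Nonempty) →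
      10 ≤ pairWt c := by
    intro hall
    have hfib := Finset.card_eq_sum_card_fiberwise
      (f := fun i : Fin (3 * p) => (i : ℕ) % 3) (s := S) (t := Finset.range 3)
      (fun i _ => Finset.mem_range.2 (Nat.mod_lt _ (by norm_num)))
    have h9 : 9 ≤ S.card := by
      rw [hfib, Finset.sum_range_succ, Finset.sum_range_succ, Finset.sum_range_one]
      beta_reduce
      have h0 := hw3 0 (hall 0 (by norm_num))
      have h1 := hw3 1 (hall 1 (by norm_num))
      have h2 := hw3 2 (hall 2 (by norm_num))
      omega
    rcases Nat.lt_or_ge S.card 10 with hlt | hge10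
    swap
    · omega
    have hzero : ∃ i0 : Fin (3 * p), c i0 = 0 := by
      by_contra hno
      push_neg at hno
      have hSU : S = Finset.univ := by
        ext i
        simp only [memS i, Finset.mem_univ, iff_true]
        exact hno i
      have : S.card = 3 * p := by rw [hSU, Finset.card_univ, Fintype.card_fin]
      omega
    obtain ⟨i0, hi0⟩ := hzero
    have hBne : 1 ≤ Bs.card := by
      rw [Nat.one_le_iff_ne_zero, Ne, Finset.card_eq_zero]
      intro hb
      have step : ∀ j : Fin (3 * p), c (j + 1) ≠ 0 → c j ≠ 0 := by
        intro j hj1 hj0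
        have : j ∈ Bs := (memB j).2 ⟨hj0, hj1⟩
        rw [hb] at this
        exact Finset.notMem_empty j this
      obtain ⟨i, hi⟩ := hSne
      have key : ∀ m : ℕ, c (i - (m : Fin (3 * p))) ≠ 0 := by
        intro m
        induction m with
        | zero => simpa using hnzS i hi
        | succ m ih =>
            apply step
            have he : i - ((m + 1 : ℕ) : Fin (3 * p)) + 1 = i - (m : Fin (3 * p)) := by
              push_cast
              ring
            rw [he]
            exact ih
      have := key ((i - i0 : Fin (3 * p)) : ℕ)
      rw [Fin.cast_val_eq_self (i - i0), sub_sub_cancel] at this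
      exact this hi0
    omega
  -- CASE 2: exactly two residue classes
  have two : ∀ a b : ℕ, a < 3 → b = (a + 1) % 3 →
      (S.filter (fun i : Fin (3 * p) => (i : ℕ) % 3 = a)).Nonempty →
      (S.filter (fun i : Fin (3 * p) => (i : ℕ) % 3 = b)).Nonempty →
      (∀ i ∈ S, (i : ℕ) % 3 = a ∨ (i : ℕ) % 3 = b) →
      10 ≤ pairWt c := by
    intro a b ha hb hna hnb hsub
    have hab : a ≠ b := by omega
    have hwa := hw3 a hna
    have hwb := hw3 b hnb
    set Sa := S.filter (fun i : Fin (3 * p) => (i : ℕ) % 3 = a) with hSa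
    set Sb := S.filter (fun i : Fin (3 * p) => (i : ℕ) % 3 = b) with hSb
    have hdisj : Disjoint Sa Sb := by
      rw [Finset.disjoint_left]
      intro i hi hj
      exact hab ((Finset.mem_filter.1 hi).2.symm.trans (Finset.mem_filter.1 hj).2)
    have hunion : Sa ∪ Sb = S := by
      ext i
      simp only [Finset.mem_union, hSa, hSb, Finset.mem_filter]
      constructor
      · rintro (hh | hh) <;> exact hh.1
      · intro hi
        rcases hsub i hi with hh | hh
        · exact Or.inl ⟨hi, hh⟩
        · exact Or.inr ⟨hi, hh⟩
    have hScard : S.card = Sa.card + Sb.card := by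
      rw [← hunion, Finset.card_union_of_disjoint hdisj]
    have hpsi : ∀ i ∈ S, (if c (i - 1) = 0 then i - 1 else i - 2) ∈ Bs := by
      intro i hi
      by_cases h1 : c (i - 1) = 0
      · rw [if_pos h1, memB]
        refine ⟨h1, ?_⟩
        rw [sub_add_cancel]
        exact hnzS i hi
      · rw [if_neg h1, memB]
        have hm1 : (i - 1) ∈ S := (memS _).2 h1
        have e21 : i - 2 + 1 = i - 1 := by ring
        constructor
        · by_contra h2
          have hm2 : (i - 2) ∈ S := (memS _).2 h2
          have r1 := v1 (i - 1)
          rw [sub_add_cancel] at r1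
          have r2 := v1 (i - 2)
          rw [e21] at r2
          have q0 := hsub i hi
          have q1 := hsub _ hm1
          have q2 := hsub _ hm2
          omega
        · rw [e21]
          exact h1
    have hfiber : ∀ t : Fin (3 * p),
        S.filter (fun i => (if c (i - 1) = 0 then i - 1 else i - 2) = t) ⊆ {t + 1, t + 2} := by
      intro t i hi
      simp only [Finset.mem_filter] at hi
      obtain ⟨hiS, hit⟩ := hi
      by_cases h1 : c (i - 1) = 0
      · rw [if_pos h1] at hit
        have : i = t + 1 := by rw [← hit]; ring
        simp [this]
      · rw [if_neg h1] at hit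
        have : i = t + 2 := by rw [← hit]; ring
        simp [this]
    have hpair2 : ∀ t : Fin (3 * p), ({t + 1, t + 2} : Finset (Fin (3 * p))).card ≤ 2 := by
      intro t
      apply le_trans (Finset.card_insert_le _ _)
      simp
    have h2B : S.card ≤ 2 * Bs.card := by
      apply Finset.card_le_mul_card_image_of_maps_to hpsi
      intro t _
      exact le_trans (Finset.card_le_card (hfiber t)) (hpair2 t)
    rcases Nat.lt_or_ge S.card 7 with hS7 | hS7
    swap
    · omega
    have h6 : S.card = 6 := by omega
    have hwa3 : Sa.card = 3 := by omega
    have hwb3 : Sb.card = 3 := by omega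
    rcases Nat.lt_or_ge Bs.card 4 with hB4 | hB4
    swap
    · omega
    have hB3 : Bs.card = 3 := by omega
    have hsumfib := Finset.card_eq_sum_card_fiberwise hpsi
    have hfible : ∀ u ∈ Bs,
        (S.filter (fun i => (if c (i - 1) = 0 then i - 1 else i - 2) = u)).card ≤ 2 :=
      fun u _ => le_trans (Finset.card_le_card (hfiber u)) (hpair2 u)
    have hfib2 : ∀ t ∈ Bs,
        (S.filter (fun i => (if c (i - 1) = 0 then i - 1 else i - 2) = t)).card = 2 := by
      intro t ht
      by_contra hne2
      have ht1 : (S.filter (fun i => (if c (i - 1) = 0 then i - 1 else i - 2) = t)).card ≤ 1 := by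
        have := hfible t ht
        omega
      have hrest := Finset.sum_erase_add Bs
        (fun u => (S.filter (fun i => (if c (i - 1) = 0 then i - 1 else i - 2) = u)).card) ht
      have hbound : ∑ u ∈ Bs.erase t,
          (S.filter (fun i => (if c (i - 1) = 0 then i - 1 else i - 2) = u)).card
          ≤ (Bs.erase t).card * 2 := by
        apply Finset.sum_le_card_nsmul
        intro u hu
        exact hfible u (Finset.mem_of_mem_erase hu)
      have hce : (Bs.erase t).card = 2 := by
        rw [Finset.card_erase_of_mem ht, hB3]
      beta_reduce at hrest hsumfib hbound
      omega
    have hmemS12 : ∀ t ∈ Bs, t + 1 ∈ S ∧ t + 2 ∈ S := by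
      intro t ht
      have heq : S.filter (fun i => (if c (i - 1) = 0 then i - 1 else i - 2) = t)
          = {t + 1, t + 2} := by
        apply Finset.eq_of_subset_of_card_le (hfiber t)
        rw [hfib2 t ht]
        exact hpair2 t
      have hm1 : t + 1 ∈ S.filter (fun i => (if c (i - 1) = 0 then i - 1 else i - 2) = t) := by
        rw [heq]; simp
      have hm2 : t + 2 ∈ S.filter (fun i => (if c (i - 1) = 0 then i - 1 else i - 2) = t) := by
        rw [heq]; simp
      exact ⟨(Finset.mem_filter.1 hm1).1, (Finset.mem_filter.1 hm2).1⟩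
    have hres12 : ∀ t ∈ Bs, ((t + 1 : Fin (3 * p)) : ℕ) % 3 = a ∧
        ((t + 2 : Fin (3 * p)) : ℕ) % 3 = b := by
      intro t ht
      obtain ⟨h1, h2⟩ := hmemS12 t ht
      have q1 := hsub _ h1
      have q2 := hsub _ h2
      have e21 : (t + 1) + 1 = t + 2 := by ring
      have r2 := v1 (t + 1)
      rw [e21] at r2
      omega
    have hinjadd : ∀ u : Fin (3 * p), Function.Injective fun t : Fin (3 * p) => t + u := by
      intro u x y hxy
      have := congrArg (fun w => w - u) hxy
      simpa using this
    have him1 : Bs.image (fun t => t + 1) = Sa := by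
      apply Finset.eq_of_subset_of_card_le
      · intro x hx
        simp only [Finset.mem_image] at hx
        obtain ⟨t, ht, rfl⟩ := hx
        rw [hSa, Finset.mem_filter]
        exact ⟨(hmemS12 t ht).1, (hres12 t ht).1⟩
      · rw [Finset.card_image_of_injective _ (hinjadd 1), hB3, hwa3]
    have him2 : Bs.image (fun t => t + 2) = Sb := by
      apply Finset.eq_of_subset_of_card_le
      · intro x hx
        simp only [Finset.mem_image] at hx
        obtain ⟨t, ht, rfl⟩ := hx
        rw [hSb, Finset.mem_filter]
        exact ⟨(hmemS12 t ht).2, (hres12 t ht).2⟩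
      · rw [Finset.card_image_of_injective _ (hinjadd 2), hB3, hwb3]
    have tr1 : ∀ f : Fin (3 * p) → ZMod p, ∑ i ∈ Sa, f i = ∑ t ∈ Bs, f (t + 1) := by
      intro f
      rw [← him1, Finset.sum_image (fun x _ y _ hxy => hinjadd 1 hxy)]
    have tr2 : ∀ f : Fin (3 * p) → ZMod p, ∑ i ∈ Sb, f i = ∑ t ∈ Bs, f (t + 2) := by
      intro f
      rw [← him2, Finset.sum_image (fun x _ y _ hxy => hinjadd 2 hxy)]
    set z : Fin (3 * p) → ZMod p := fun t => ((t : ℕ) : ZMod p) + 1 with hzdef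
    have hz1 : ∀ t : Fin (3 * p), (((t + 1 : Fin (3 * p)) : ℕ) : ZMod p) = z t := fun t => v2 t
    have hz2 : ∀ t : Fin (3 * p), (((t + 2 : Fin (3 * p)) : ℕ) : ZMod p) = z t + 1 := by
      intro t
      have e : t + 2 = (t + 1) + 1 := by ring
      rw [e, v2 (t + 1), v2 t]
    have hzinj : Set.InjOn z ↑Bs := by
      intro x hx y hy hxy
      have hx1 : ((x + 1 : Fin (3 * p)) : ℕ) % 3 = a := (hres12 x (Finset.mem_coe.1 hx)).1
      have hy1 : ((y + 1 : Fin (3 * p)) : ℕ) % 3 = a := (hres12 y (Finset.mem_coe.1 hy)).1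
      have : (x + 1 : Fin (3 * p)) = y + 1 := by
        apply vinj _ _ (hx1.trans hy1.symm)
        rw [hz1 x, hz1 y]
        exact hxy
      have := congrArg (fun w => w - (1 : Fin (3 * p))) this
      simpa using this
    -- raw moments
    have A0 : ∑ t ∈ Bs, c (t + 1) = 0 := by
      have hh := momT01 a 0 (by norm_num)
      rw [← hSa, tr1 (fun i => c i * ((i : ℕ) : ZMod p) ^ 0)] at hh
      refine Eq.trans ?_ hh
      exact (Finset.sum_congr rfl fun t _ => by rw [pow_zero, mul_one]).symm
    have A1 : ∑ t ∈ Bs, c (t + 1) * z t = 0 := by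
      have hh := momT01 a 1 (by norm_num)
      rw [← hSa, tr1 (fun i => c i * ((i : ℕ) : ZMod p) ^ 1)] at hh
      refine Eq.trans ?_ hh
      exact (Finset.sum_congr rfl fun t _ => by rw [pow_one, hz1 t]).symm
    have B0 : ∑ t ∈ Bs, c (t + 2) = 0 := by
      have hh := momT01 b 0 (by norm_num)
      rw [← hSb, tr2 (fun i => c i * ((i : ℕ) : ZMod p) ^ 0)] at hh
      refine Eq.trans ?_ hh
      exact (Finset.sum_congr rfl fun t _ => by rw [pow_zero, mul_one]).symm
    have B1raw : ∑ t ∈ Bs, c (t + 2) * (z t + 1) = 0 := by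
      have hh := momT01 b 1 (by norm_num)
      rw [← hSb, tr2 (fun i => c i * ((i : ℕ) : ZMod p) ^ 1)] at hh
      refine Eq.trans ?_ hh
      exact (Finset.sum_congr rfl fun t _ => by rw [pow_one, hz2 t]).symm
    have EB1 : ∑ t ∈ Bs, c (t + 2) * (z t + 1)
        = (∑ t ∈ Bs, c (t + 2) * z t) + ∑ t ∈ Bs, c (t + 2) := by
      rw [← Finset.sum_add_distrib]
      exact Finset.sum_congr rfl fun t _ => by ring
    have B1 : ∑ t ∈ Bs, c (t + 2) * z t = 0 := by
      linear_combination B1raw - EB1 - B0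
    have G2 : (∑ t ∈ Bs, c (t + 1) * z t ^ 2) + (∑ t ∈ Bs, c (t + 2) * (z t + 1) ^ 2) = 0 := by
      have hh := hC
      rw [sumS (fun i => ((i : ℕ) : ZMod p) ^ 2), ← hunion, Finset.sum_union hdisj,
        tr1 (fun i => c i * ((i : ℕ) : ZMod p) ^ 2),
        tr2 (fun i => c i * ((i : ℕ) : ZMod p) ^ 2)] at hh
      refine Eq.trans ?_ hh
      congr 1
      · exact (Finset.sum_congr rfl fun t _ => by rw [hz1 t]).symm
      · exact (Finset.sum_congr rfl fun t _ => by rw [hz2 t]).symm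
    have G3 : (∑ t ∈ Bs, c (t + 1) * z t ^ 3) + (∑ t ∈ Bs, c (t + 2) * (z t + 1) ^ 3) = 0 := by
      have hh := hD
      rw [sumS (fun i => ((i : ℕ) : ZMod p) ^ 3), ← hunion, Finset.sum_union hdisj,
        tr1 (fun i => c i * ((i : ℕ) : ZMod p) ^ 3),
        tr2 (fun i => c i * ((i : ℕ) : ZMod p) ^ 3)] at hh
      refine Eq.trans ?_ hh
      congr 1
      · exact (Finset.sum_congr rfl fun t _ => by rw [hz1 t]).symm
      · exact (Finset.sum_congr rfl fun t _ => by rw [hz2 t]).symm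
    -- the difference vector d t = c (t+1) + c (t+2) vanishes
    have E0 : ∑ t ∈ Bs, (c (t + 1) + c (t + 2))
        = (∑ t ∈ Bs, c (t + 1)) + ∑ t ∈ Bs, c (t + 2) := Finset.sum_add_distrib
    have E1 : ∑ t ∈ Bs, (c (t + 1) + c (t + 2)) * z t
        = (∑ t ∈ Bs, c (t + 1) * z t) + ∑ t ∈ Bs, c (t + 2) * z t := by
      rw [← Finset.sum_add_distrib]
      exact Finset.sum_congr rfl fun t _ => by ring
    have E2 : ∑ t ∈ Bs, (c (t + 1) + c (t + 2)) * z t ^ 2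
        = (∑ t ∈ Bs, c (t + 1) * z t ^ 2) + ∑ t ∈ Bs, c (t + 2) * z t ^ 2 := by
      rw [← Finset.sum_add_distrib]
      exact Finset.sum_congr rfl fun t _ => by ring
    have F2 : ∑ t ∈ Bs, c (t + 2) * (z t + 1) ^ 2
        = (∑ t ∈ Bs, c (t + 2) * z t ^ 2) + (2 * (∑ t ∈ Bs, c (t + 2) * z t)
          + ∑ t ∈ Bs, c (t + 2)) := by
      rw [Finset.mul_sum, ← Finset.sum_add_distrib, ← Finset.sum_add_distrib]
      exact Finset.sum_congr rfl fun t _ => by ring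
    have D0 : ∑ t ∈ Bs, (c (t + 1) + c (t + 2)) = 0 := by
      linear_combination E0 + A0 + B0
    have D1 : ∑ t ∈ Bs, (c (t + 1) + c (t + 2)) * z t = 0 := by
      linear_combination E1 + A1 + B1
    have D2 : ∑ t ∈ Bs, (c (t + 1) + c (t + 2)) * z t ^ 2 = 0 := by
      linear_combination E2 + G2 - F2 - 2 * B1 - B0
    have hd0 : ∀ t ∈ Bs, c (t + 1) + c (t + 2) = 0 := by
      apply vand_card hzinj
      intro k hk
      rw [hB3] at hk
      interval_cases k
      · simpa using D0
      · simpa using D1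
      · exact D2
    have Z3 : ∑ t ∈ Bs, (c (t + 1) + c (t + 2)) * z t ^ 3 = 0 :=
      Finset.sum_eq_zero fun t ht => by rw [hd0 t ht, zero_mul]
    have E3 : ∑ t ∈ Bs, (c (t + 1) + c (t + 2)) * z t ^ 3
        = (∑ t ∈ Bs, c (t + 1) * z t ^ 3) + ∑ t ∈ Bs, c (t + 2) * z t ^ 3 := by
      rw [← Finset.sum_add_distrib]
      exact Finset.sum_congr rfl fun t _ => by ring
    have F3 : ∑ t ∈ Bs, c (t + 2) * (z t + 1) ^ 3
        = (∑ t ∈ Bs, c (t + 2) * z t ^ 3) + (3 * (∑ t ∈ Bs, c (t + 2) * z t ^ 2)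
          + (3 * (∑ t ∈ Bs, c (t + 2) * z t) + ∑ t ∈ Bs, c (t + 2))) := by
      rw [Finset.mul_sum, Finset.mul_sum, ← Finset.sum_add_distrib, ← Finset.sum_add_distrib,
        ← Finset.sum_add_distrib]
      exact Finset.sum_congr rfl fun t _ => by ring
    have h3sq : (3 : ZMod p) * ∑ t ∈ Bs, c (t + 2) * z t ^ 2 = 0 := by
      linear_combination E3 - Z3 + G3 - F3 - 3 * B1 - B0
    have hc2sq : ∑ t ∈ Bs, c (t + 2) * z t ^ 2 = 0 :=
      (mul_eq_zero.mp h3sq).resolve_left hchar3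
    have hcontr : ∀ t ∈ Bs, c (t + 2) = 0 := by
      apply vand_card hzinj
      intro k hk
      rw [hB3] at hk
      interval_cases k
      · simpa using B0
      · simpa using B1
      · exact hc2sq
    have hBne : Bs.Nonempty := Finset.card_pos.1 (by omega)
    obtain ⟨t, ht⟩ := hBne
    exact absurd (hcontr t ht) (hnzS _ (hmemS12 t ht).2)
  -- final case analysis
  by_cases e0 : (S.filter (fun i : Fin (3 * p) => (i : ℕ) % 3 = 0)).Nonempty
  · by_cases e1 : (S.filter (fun i : Fin (3 * p) => (i : ℕ) % 3 = 1)).Nonempty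
    · by_cases e2 : (S.filter (fun i : Fin (3 * p) => (i : ℕ) % 3 = 2)).Nonempty
      · refine allthree fun r hr => ?_
        interval_cases r
        · exact e0
        · exact e1
        · exact e2
      · rw [Finset.not_nonempty_iff_eq_empty] at e2
        refine two 0 1 (by norm_num) (by norm_num) e0 e1 fun i hi => ?_
        have h3i : (i : ℕ) % 3 < 3 := Nat.mod_lt _ (by norm_num)
        by_contra hcon
        push_neg at hcon
        have : (i : ℕ) % 3 = 2 := by omega
        have : i ∈ S.filter (fun i : Fin (3 * p) => (i : ℕ) % 3 = 2) :=
          Finset.mem_filter.2 ⟨hi, this⟩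
        rw [e2] at this
        exact Finset.notMem_empty i this
    · by_cases e2 : (S.filter (fun i : Fin (3 * p) => (i : ℕ) % 3 = 2)).Nonempty
      · rw [Finset.not_nonempty_iff_eq_empty] at e1
        refine two 2 0 (by norm_num) (by norm_num) e2 e0 fun i hi => ?_
        have h3i : (i : ℕ) % 3 < 3 := Nat.mod_lt _ (by norm_num)
        by_contra hcon
        push_neg at hcon
        have : (i : ℕ) % 3 = 1 := by omega
        have : i ∈ S.filter (fun i : Fin (3 * p) => (i : ℕ) % 3 = 1) :=
          Finset.mem_filter.2 ⟨hi, this⟩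
        rw [e1] at this
        exact Finset.notMem_empty i this
      · rw [Finset.not_nonempty_iff_eq_empty] at e1 e2
        refine single 0 (by norm_num) fun i hi => ?_
        have h3i : (i : ℕ) % 3 < 3 := Nat.mod_lt _ (by norm_num)
        by_contra hcon
        have h1 : (i : ℕ) % 3 = 1 ∨ (i : ℕ) % 3 = 2 := by omega
        rcases h1 with h1 | h1
        · have : i ∈ S.filter (fun i : Fin (3 * p) => (i : ℕ) % 3 = 1) :=
            Finset.mem_filter.2 ⟨hi, h1⟩
          rw [e1] at this
          exact Finset.notMem_empty i this
        · have : i ∈ S.filter (fun i : Fin (3 * p) => (i : ℕ) % 3 = 2) :=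
            Finset.mem_filter.2 ⟨hi, h1⟩
          rw [e2] at this
          exact Finset.notMem_empty i this
  · rw [Finset.not_nonempty_iff_eq_empty] at e0
    by_cases e1 : (S.filter (fun i : Fin (3 * p) => (i : ℕ) % 3 = 1)).Nonempty
    · by_cases e2 : (S.filter (fun i : Fin (3 * p) => (i : ℕ) % 3 = 2)).Nonempty
      · refine two 1 2 (by norm_num) (by norm_num) e1 e2 fun i hi => ?_
        have h3i : (i : ℕ) % 3 < 3 := Nat.mod_lt _ (by norm_num)
        by_contra hcon
        push_neg at hcon
        have : (i : ℕ) % 3 = 0 := by omega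
        have : i ∈ S.filter (fun i : Fin (3 * p) => (i : ℕ) % 3 = 0) :=
          Finset.mem_filter.2 ⟨hi, this⟩
        rw [e0] at this
        exact Finset.notMem_empty i this
      · rw [Finset.not_nonempty_iff_eq_empty] at e2
        refine single 1 (by norm_num) fun i hi => ?_
        have h3i : (i : ℕ) % 3 < 3 := Nat.mod_lt _ (by norm_num)
        by_contra hcon
        have h1 : (i : ℕ) % 3 = 0 ∨ (i : ℕ) % 3 = 2 := by omega
        rcases h1 with h1 | h1
        · have : i ∈ S.filter (fun i : Fin (3 * p) => (i : ℕ) % 3 = 0) :=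
            Finset.mem_filter.2 ⟨hi, h1⟩
          rw [e0] at this
          exact Finset.notMem_empty i this
        · have : i ∈ S.filter (fun i : Fin (3 * p) => (i : ℕ) % 3 = 2) :=
            Finset.mem_filter.2 ⟨hi, h1⟩
          rw [e2] at this
          exact Finset.notMem_empty i this
    · by_cases e2 : (S.filter (fun i : Fin (3 * p) => (i : ℕ) % 3 = 2)).Nonempty
      · rw [Finset.not_nonempty_iff_eq_empty] at e1
        refine single 2 (by norm_num) fun i hi => ?_
        have h3i : (i : ℕ) % 3 < 3 := Nat.mod_lt _ (by norm_num)
        by_contra hcon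
        have h1 : (i : ℕ) % 3 = 0 ∨ (i : ℕ) % 3 = 1 := by omega
        rcases h1 with h1 | h1
        · have : i ∈ S.filter (fun i : Fin (3 * p) => (i : ℕ) % 3 = 0) :=
            Finset.mem_filter.2 ⟨hi, h1⟩
          rw [e0] at this
          exact Finset.notMem_empty i this
        · have : i ∈ S.filter (fun i : Fin (3 * p) => (i : ℕ) % 3 = 1) :=
            Finset.mem_filter.2 ⟨hi, h1⟩
          rw [e1] at this
          exact Finset.notMem_empty i this
      · exfalso
        rw [Finset.not_nonempty_iff_eq_empty] at e1 e2
        obtain ⟨i, hi⟩ := hSne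
        have h3i : (i : ℕ) % 3 < 3 := Nat.mod_lt _ (by norm_num)
        have h1 : (i : ℕ) % 3 = 0 ∨ (i : ℕ) % 3 = 1 ∨ (i : ℕ) % 3 = 2 := by omega
        rcases h1 with h1 | h1 | h1
        · have : i ∈ S.filter (fun i : Fin (3 * p) => (i : ℕ) % 3 = 0) :=
            Finset.mem_filter.2 ⟨hi, h1⟩
          rw [e0] at this
          exact Finset.notMem_empty i this
        · have : i ∈ S.filter (fun i : Fin (3 * p) => (i : ℕ) % 3 = 1) :=
            Finset.mem_filter.2 ⟨hi, h1⟩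
          rw [e1] at this
          exact Finset.notMem_empty i this
        · have : i ∈ S.filter (fun i : Fin (3 * p) => (i : ℕ) % 3 = 2) :=
            Finset.mem_filter.2 ⟨hi, h1⟩
          rw [e2] at this
          exact Finset.notMem_empty i this

-- the example codeword (X^3-1)^4
def cstar (p : ℕ) : Fin (3 * p) → ZMod p := fun i =>
  if (i : ℕ) = 0 then 1 else if (i : ℕ) = 3 then -4 else if (i : ℕ) = 6 then 6
  else if (i : ℕ) = 9 then -4 else if (i : ℕ) = 12 then 1 else 0

theorem cstar_ne_zero (hp7 : 7 ≤ p) : cstar p ≠ 0 := by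
  intro h
  have := congrFun h ⟨0, by omega⟩
  rw [cstar] at this
  norm_num at this

theorem pv_cstar (hp7 : 7 ≤ p) :
    pv (cstar p) = ((X : (ZMod p)[X]) ^ 3 - 1) ^ 4 := by
  have huniv : (Finset.univ : Finset (Fin (3 * p)))
      = insert ⟨0, by omega⟩ (insert ⟨3, by omega⟩ (insert ⟨6, by omega⟩ (insert ⟨9, by omega⟩
        (insert (⟨12, by omega⟩ : Fin (3 * p)) (Finset.univ.filter fun i : Fin (3 * p) =>
          ¬((i : ℕ) = 0 ∨ (i : ℕ) = 3 ∨ (i : ℕ) = 6 ∨ (i : ℕ) = 9 ∨ (i : ℕ) = 12)))))) := by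
    ext i
    simp only [Finset.mem_insert, Finset.mem_filter, Finset.mem_univ, true_and, Fin.ext_iff,
      iff_true]
    by_cases h : (i : ℕ) = 0 ∨ (i : ℕ) = 3 ∨ (i : ℕ) = 6 ∨ (i : ℕ) = 9 ∨ (i : ℕ) = 12
    · rcases h with h | h | h | h | h <;> simp [h]
    · push_neg at h
      obtain ⟨h1, h2, h3, h4, h5⟩ := h
      simp [h1, h2, h3, h4, h5]
  have hn1 : (⟨0, by omega⟩ : Fin (3 * p)) ∉ insert ⟨3, by omega⟩ (insert ⟨6, by omega⟩
      (insert ⟨9, by omega⟩ (insert (⟨12, by omega⟩ : Fin (3 * p))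
        (Finset.univ.filter fun i : Fin (3 * p) =>
          ¬((i : ℕ) = 0 ∨ (i : ℕ) = 3 ∨ (i : ℕ) = 6 ∨ (i : ℕ) = 9 ∨ (i : ℕ) = 12))))) := by
    simp only [Finset.mem_insert, Finset.mem_filter, Finset.mem_univ, true_and, Fin.ext_iff]
    simp
  have hn2 : (⟨3, by omega⟩ : Fin (3 * p)) ∉ insert ⟨6, by omega⟩
      (insert ⟨9, by omega⟩ (insert (⟨12, by omega⟩ : Fin (3 * p))
        (Finset.univ.filter fun i : Fin (3 * p) =>
          ¬((i : ℕ) = 0 ∨ (i : ℕ) = 3 ∨ (i : ℕ) = 6 ∨ (i : ℕ) = 9 ∨ (i : ℕ) = 12)))) := by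
    simp only [Finset.mem_insert, Finset.mem_filter, Finset.mem_univ, true_and, Fin.ext_iff]
    simp
  have hn3 : (⟨6, by omega⟩ : Fin (3 * p)) ∉ insert ⟨9, by omega⟩
      (insert (⟨12, by omega⟩ : Fin (3 * p))
        (Finset.univ.filter fun i : Fin (3 * p) =>
          ¬((i : ℕ) = 0 ∨ (i : ℕ) = 3 ∨ (i : ℕ) = 6 ∨ (i : ℕ) = 9 ∨ (i : ℕ) = 12))) := by
    simp only [Finset.mem_insert, Finset.mem_filter, Finset.mem_univ, true_and, Fin.ext_iff]
    simp
  have hn4 : (⟨9, by omega⟩ : Fin (3 * p)) ∉ insert (⟨12, by omega⟩ : Fin (3 * p))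
        (Finset.univ.filter fun i : Fin (3 * p) =>
          ¬((i : ℕ) = 0 ∨ (i : ℕ) = 3 ∨ (i : ℕ) = 6 ∨ (i : ℕ) = 9 ∨ (i : ℕ) = 12)) := by
    simp only [Finset.mem_insert, Finset.mem_filter, Finset.mem_univ, true_and, Fin.ext_iff]
    simp
  have hn5 : (⟨12, by omega⟩ : Fin (3 * p)) ∉ Finset.univ.filter fun i : Fin (3 * p) =>
          ¬((i : ℕ) = 0 ∨ (i : ℕ) = 3 ∨ (i : ℕ) = 6 ∨ (i : ℕ) = 9 ∨ (i : ℕ) = 12) := by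
    simp only [Finset.mem_insert, Finset.mem_filter, Finset.mem_univ, true_and, Fin.ext_iff]
    simp
  rw [pv, huniv, Finset.sum_insert hn1, Finset.sum_insert hn2, Finset.sum_insert hn3,
    Finset.sum_insert hn4, Finset.sum_insert hn5]
  have hz : ∀ i ∈ Finset.univ.filter fun i : Fin (3 * p) =>
      ¬((i : ℕ) = 0 ∨ (i : ℕ) = 3 ∨ (i : ℕ) = 6 ∨ (i : ℕ) = 9 ∨ (i : ℕ) = 12),
      C (cstar p i) * X ^ (i : ℕ) = 0 := by
    intro i hi
    rw [Finset.mem_filter] at hi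
    obtain ⟨-, hi⟩ := hi
    push_neg at hi
    obtain ⟨h1, h2, h3, h4, h5⟩ := hi
    rw [cstar]
    rw [if_neg h1, if_neg h2, if_neg h3, if_neg h4, if_neg h5, map_zero, zero_mul]
  rw [Finset.sum_eq_zero hz]
  have e0 : cstar p ⟨0, by omega⟩ = 1 := by norm_num [cstar]
  have e3 : cstar p ⟨3, by omega⟩ = -4 := by norm_num [cstar]
  have e6 : cstar p ⟨6, by omega⟩ = 6 := by norm_num [cstar]
  have e9 : cstar p ⟨9, by omega⟩ = -4 := by norm_num [cstar]
  have e12 : cstar p ⟨12, by omega⟩ = 1 := by norm_num [cstar]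
  rw [e0, e3, e6, e9, e12]
  simp only [map_one, map_neg]
  rw [show C (4 : ZMod p) = 4 from map_ofNat C 4,
    show C (6 : ZMod p) = 6 from map_ofNat C 6]
  push_cast
  ring

theorem cstar_mem (hp7 : 7 ≤ p) {ω : ZMod p} (hω3 : ω ^ 3 = 1) (hω1 : ω ≠ 1) :
    ((X - 1) ^ 4 * (X - C ω) ^ 2 * (X - C (ω ^ 2)) ^ 2 : (ZMod p)[X]) ∣ pv (cstar p) := by
  rw [pv_cstar hp7]
  have hsum : ω ^ 2 + ω + 1 = 0 := by
    have h := mul_eq_zero.mp (show (ω - 1) * (ω ^ 2 + ω + 1) = 0 by linear_combination hω3)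
    exact h.resolve_left (sub_ne_zero.2 hω1)
  have ha : (C ω : (ZMod p)[X]) ^ 2 + C ω + 1 = 0 := by
    have := congrArg (C : ZMod p →+* (ZMod p)[X]) hsum
    simpa [map_add, map_pow, map_one] using this
  have ha3 : (C ω : (ZMod p)[X]) ^ 3 = 1 := by
    have := congrArg (C : ZMod p →+* (ZMod p)[X]) hω3
    simpa [map_pow, map_one] using this
  have hfac : ((X : (ZMod p)[X]) ^ 3 - 1)
      = (X - 1) * (X - C ω) * (X - C (ω ^ 2)) := by
    rw [map_pow]
    linear_combination (X ^ 2 - (X : (ZMod p)[X])) * ha + (1 - (X : (ZMod p)[X])) * ha3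
  rw [hfac]
  exact ⟨(X - C ω) ^ 2 * (X - C (ω ^ 2)) ^ 2, by ring⟩

theorem pairWt_cstar (hp7 : 7 ≤ p) [NeZero (3 * p)] : pairWt (cstar p) = 10 := by
  have hpp : p.Prime := Fact.out
  have h4 : (-4 : ZMod p) ≠ 0 := by
    rw [neg_ne_zero]
    intro hh
    have h' : ((4 : ℕ) : ZMod p) = 0 := by exact_mod_cast hh
    have := Nat.le_of_dvd (by norm_num) ((ZMod.natCast_eq_zero_iff 4 p).1 h')
    omega
  have h6 : (6 : ZMod p) ≠ 0 := by
    intro hh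
    have h' : ((6 : ℕ) : ZMod p) = 0 := by exact_mod_cast hh
    have := Nat.le_of_dvd (by norm_num) ((ZMod.natCast_eq_zero_iff 6 p).1 h')
    omega
  have hnz : ∀ i : Fin (3 * p), (cstar p i ≠ 0 ↔
      ((i : ℕ) = 0 ∨ (i : ℕ) = 3 ∨ (i : ℕ) = 6 ∨ (i : ℕ) = 9 ∨ (i : ℕ) = 12)) := by
    intro i
    rw [cstar]
    split_ifs with hi1 hi2 hi3 hi4 hi5 <;> simp_all
  have hval1 : ∀ i : Fin (3 * p), ((i + 1 : Fin (3 * p)) : ℕ) = ((i : ℕ) + 1) % (3 * p) := by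
    intro i
    rw [Fin.add_def, Fin.val_one', Nat.mod_eq_of_lt (show (1:ℕ) < 3 * p by omega)]
  rw [pairWt]
  have hset : (Finset.univ.filter fun i : Fin (3 * p) =>
        ¬(cstar p i = 0 ∧ cstar p (i + 1) = 0))
      = {(⟨0, by omega⟩ : Fin (3 * p)), ⟨2, by omega⟩, ⟨3, by omega⟩, ⟨5, by omega⟩,
          ⟨6, by omega⟩, ⟨8, by omega⟩, ⟨9, by omega⟩, ⟨11, by omega⟩, ⟨12, by omega⟩,
          ⟨3 * p - 1, by omega⟩} := by
    ext i
    have hlt := i.isLt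
    have hiff : (¬(cstar p i = 0 ∧ cstar p (i + 1) = 0)) ↔
        (((i : ℕ) = 0 ∨ (i : ℕ) = 3 ∨ (i : ℕ) = 6 ∨ (i : ℕ) = 9 ∨ (i : ℕ) = 12) ∨
          (((i : ℕ) + 1) % (3 * p) = 0 ∨ ((i : ℕ) + 1) % (3 * p) = 3 ∨
           ((i : ℕ) + 1) % (3 * p) = 6 ∨ ((i : ℕ) + 1) % (3 * p) = 9 ∨
           ((i : ℕ) + 1) % (3 * p) = 12)) := by
      rw [not_and_or]
      have h2 := hnz (i + 1)
      rw [hval1 i] at h2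
      exact or_congr (hnz i) h2
    simp only [Finset.mem_filter, Finset.mem_univ, true_and, Finset.mem_insert,
      Finset.mem_singleton, Fin.ext_iff]
    rw [hiff]
    show _ ↔ ((i : ℕ) = 0 ∨ (i : ℕ) = 2 ∨ (i : ℕ) = 3 ∨ (i : ℕ) = 5 ∨ (i : ℕ) = 6 ∨
      (i : ℕ) = 8 ∨ (i : ℕ) = 9 ∨ (i : ℕ) = 11 ∨ (i : ℕ) = 12 ∨ (i : ℕ) = 3 * p - 1)
    rcases Nat.lt_or_ge ((i : ℕ) + 1) (3 * p) with hlt2 | hge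
    · rw [Nat.mod_eq_of_lt hlt2]
      omega
    · have heq : (i : ℕ) + 1 = 3 * p := by omega
      rw [heq, Nat.mod_self]
      omega
  have d1 : (⟨0, by omega⟩ : Fin (3 * p)) ∉ ({⟨2, by omega⟩, ⟨3, by omega⟩, ⟨5, by omega⟩, ⟨6, by omega⟩, ⟨8, by omega⟩, ⟨9, by omega⟩, ⟨11, by omega⟩, ⟨12, by omega⟩, ⟨3 * p - 1, by omega⟩} : Finset (Fin (3 * p))) := by
    simp only [Finset.mem_insert, Finset.mem_singleton, Fin.ext_iff]
    omega
  have d2 : (⟨2, by omega⟩ : Fin (3 * p)) ∉ ({⟨3, by omega⟩, ⟨5, by omega⟩, ⟨6, by omega⟩, ⟨8, by omega⟩, ⟨9, by omega⟩, ⟨11, by omega⟩, ⟨12, by omega⟩, ⟨3 * p - 1, by omega⟩} : Finset (Fin (3 * p))) := by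
    simp only [Finset.mem_insert, Finset.mem_singleton, Fin.ext_iff]
    omega
  have d3 : (⟨3, by omega⟩ : Fin (3 * p)) ∉ ({⟨5, by omega⟩, ⟨6, by omega⟩, ⟨8, by omega⟩, ⟨9, by omega⟩, ⟨11, by omega⟩, ⟨12, by omega⟩, ⟨3 * p - 1, by omega⟩} : Finset (Fin (3 * p))) := by
    simp only [Finset.mem_insert, Finset.mem_singleton, Fin.ext_iff]
    omega
  have d4 : (⟨5, by omega⟩ : Fin (3 * p)) ∉ ({⟨6, by omega⟩, ⟨8, by omega⟩, ⟨9, by omega⟩, ⟨11, by omega⟩, ⟨12, by omega⟩, ⟨3 * p - 1, by omega⟩} : Finset (Fin (3 * p))) := by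
    simp only [Finset.mem_insert, Finset.mem_singleton, Fin.ext_iff]
    omega
  have d5 : (⟨6, by omega⟩ : Fin (3 * p)) ∉ ({⟨8, by omega⟩, ⟨9, by omega⟩, ⟨11, by omega⟩, ⟨12, by omega⟩, ⟨3 * p - 1, by omega⟩} : Finset (Fin (3 * p))) := by
    simp only [Finset.mem_insert, Finset.mem_singleton, Fin.ext_iff]
    omega
  have d6 : (⟨8, by omega⟩ : Fin (3 * p)) ∉ ({⟨9, by omega⟩, ⟨11, by omega⟩, ⟨12, by omega⟩, ⟨3 * p - 1, by omega⟩} : Finset (Fin (3 * p))) := by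
    simp only [Finset.mem_insert, Finset.mem_singleton, Fin.ext_iff]
    omega
  have d7 : (⟨9, by omega⟩ : Fin (3 * p)) ∉ ({⟨11, by omega⟩, ⟨12, by omega⟩, ⟨3 * p - 1, by omega⟩} : Finset (Fin (3 * p))) := by
    simp only [Finset.mem_insert, Finset.mem_singleton, Fin.ext_iff]
    omega
  have d8 : (⟨11, by omega⟩ : Fin (3 * p)) ∉ ({⟨12, by omega⟩, ⟨3 * p - 1, by omega⟩} : Finset (Fin (3 * p))) := by
    simp only [Finset.mem_insert, Finset.mem_singleton, Fin.ext_iff]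
    omega
  have d9 : (⟨12, by omega⟩ : Fin (3 * p)) ∉ ({⟨3 * p - 1, by omega⟩} : Finset (Fin (3 * p))) := by
    simp only [Finset.mem_insert, Finset.mem_singleton, Fin.ext_iff]
    omega
  rw [hset, Finset.card_insert_of_notMem d1, Finset.card_insert_of_notMem d2,
    Finset.card_insert_of_notMem d3, Finset.card_insert_of_notMem d4,
    Finset.card_insert_of_notMem d5, Finset.card_insert_of_notMem d6,
    Finset.card_insert_of_notMem d7, Finset.card_insert_of_notMem d8,
    Finset.card_insert_of_notMem d9, Finset.card_singleton]

end LB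
end Stmt9Aux

theorem stmt9 (p : ℕ) [Fact p.Prime] (hodd : Odd p) (h3 : 3 ∣ p - 1)
    (ω : ZMod p) (hω3 : ω ^ 3 = 1) (hω1 : ω ≠ 1) :
    Nat.card (cyclicCode (3 * p)
        ((X - 1) ^ 4 * (X - C ω) ^ 2 * (X - C (ω ^ 2)) ^ 2)) = p ^ (3 * p - 8) ∧
    IsLeast {w : ℕ | ∃ c ∈ cyclicCode (3 * p)
        ((X - 1) ^ 4 * (X - C ω) ^ 2 * (X - C (ω ^ 2)) ^ 2),
      c ≠ 0 ∧ pairWt c = w} 10 ∧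
    Nat.card (cyclicCode (3 * p)
        ((X - 1) ^ 4 * (X - C ω) ^ 2 * (X - C (ω ^ 2)) ^ 2)) = p ^ (3 * p - 10 + 2) := by
  have hpp : p.Prime := Fact.out
  have hp7 : 7 ≤ p := by
    by_contra hlt
    push_neg at hlt
    have h2le := hpp.two_le
    interval_cases p
    · simp [Nat.odd_iff] at hodd
    · omega
    · norm_num at hpp
    · omega
    · norm_num at hpp
  haveI hnz3p : NeZero (3 * p) := ⟨by omega⟩
  have hX1 : (X - 1 : (ZMod p)[X]) = X - C 1 := by rw [C_1]
  have m1 : ((X - C (1 : ZMod p)) ^ 4).Monic := (monic_X_sub_C (1 : ZMod p)).pow 4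
  have m2 : ((X - C ω) ^ 2 : (ZMod p)[X]).Monic := (monic_X_sub_C ω).pow 2
  have m3 : ((X - C (ω ^ 2)) ^ 2 : (ZMod p)[X]).Monic := (monic_X_sub_C (ω ^ 2)).pow 2
  have hmono : ((X - 1) ^ 4 * (X - C ω) ^ 2 * (X - C (ω ^ 2)) ^ 2 : (ZMod p)[X]).Monic := by
    rw [hX1]
    exact (m1.mul m2).mul m3
  have hdeg : ((X - 1) ^ 4 * (X - C ω) ^ 2 * (X - C (ω ^ 2)) ^ 2 : (ZMod p)[X]).natDegree
      = 8 := by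
    rw [hX1, natDegree_mul (m1.mul m2).ne_zero m3.ne_zero, natDegree_mul m1.ne_zero m2.ne_zero,
      natDegree_pow, natDegree_pow, natDegree_pow, natDegree_X_sub_C, natDegree_X_sub_C,
      natDegree_X_sub_C]
  have hcard : Nat.card (cyclicCode (3 * p)
      ((X - 1) ^ 4 * (X - C ω) ^ 2 * (X - C (ω ^ 2)) ^ 2)) = p ^ (3 * p - 8) := by
    have he : {c : Fin (3 * p) → ZMod p //
          ((X - 1) ^ 4 * (X - C ω) ^ 2 * (X - C (ω ^ 2)) ^ 2 : (ZMod p)[X]) ∣ Stmt9Aux.pv c}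
        ≃ (Fin (3 * p - ((X - 1) ^ 4 * (X - C ω) ^ 2
            * (X - C (ω ^ 2)) ^ 2 : (ZMod p)[X]).natDegree) → ZMod p) :=
      Stmt9Aux.codeEquiv _ hmono (by rw [hdeg]; omega)
    rw [hdeg] at he
    have : Nat.card (cyclicCode (3 * p)
        ((X - 1) ^ 4 * (X - C ω) ^ 2 * (X - C (ω ^ 2)) ^ 2))
        = Nat.card (Fin (3 * p - 8) → ZMod p) := Nat.card_congr he
    rw [this, Nat.card_eq_fintype_card, Fintype.card_fun, Fintype.card_fin, ZMod.card]
  refine ⟨hcard, ⟨?_, ?_⟩, ?_⟩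
  · exact ⟨Stmt9Aux.cstar p, Stmt9Aux.cstar_mem hp7 hω3 hω1,
      Stmt9Aux.cstar_ne_zero hp7, Stmt9Aux.pairWt_cstar hp7⟩
  · rintro w ⟨c, hmem, hne, rfl⟩
    exact Stmt9Aux.lower_bound hp7 hω3 hω1 hne hmem
  · rw [show 3 * p - 10 + 2 = 3 * p - 8 by omega]
    exact hcard
end

section
/- Let C be an η-constacyclic code over F_q of length n with minimum Hamming distance d_H satisfying 2 ≤ d_H < n and dimension k. Then the minimum symbol-pair distance of C is at least d_H + 2 if and only if C is not an MDS code in the Hamming metric, i.e., if and only if k < n - d_H + 1. -/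
/-- The η-constacyclic shift on `F^n`. -/
def constaShift {F : Type*} [Field F] {n : ℕ} [NeZero n] (η : F) (c : Fin n → F) :
    Fin n → F :=
  fun i => (if i = 0 then η else 1) * c (i - 1)

/-!
A nonzero codeword `c` has `pairWt c = hammingWt c + r`, where `r` counts the cyclic runs of
zeros of `c`, and `r ≥ 1` unless `c` has full weight. Hence `pairWt c ≤ d + 1` forces (after
replacing a full-weight `c` by a minimum-weight codeword when `n = d + 1`) a codeword of weight
`d` whose support is a single cyclic interval (a burst). A constacyclic shift moves it to
`[0, d)`, and its shifts by `0, …, n - d` are in echelon form, so `k ≥ n - d + 1`. Conversely,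
if `k > n - d` some nonzero codeword vanishes on `[d, n)`, and its pair weight is at most `d + 1`.
-/

open Finset Fin.NatCast Fin.CommRing Module

section Weights

variable {F : Type*} [Zero F] [DecidableEq F] {n : ℕ} [NeZero n]

def zeroRunEnds (x : Fin n → F) : Finset (Fin n) :=
  univ.filter fun i => x i = 0 ∧ x (i + 1) ≠ 0

theorem pairWt_eq_hammingWt_add_card_zeroRunEnds (x : Fin n → F) :
    pairWt x = hammingWt x + #(zeroRunEnds x) := by
  rw [pairWt, hammingWt, zeroRunEnds, ← card_union_of_disjoint]
  · congr 1
    ext i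
    simp only [mem_union, mem_filter, mem_univ, true_and]
    tauto
  · exact disjoint_filter.mpr fun i _ hi hz => hi hz.1

theorem pairWt_le (x : Fin n → F) : pairWt x ≤ n :=
  (card_le_univ _).trans_eq (Fintype.card_fin n)

theorem eq_zero_of_zeroRunEnds_eq_empty {x : Fin n → F} (h : zeroRunEnds x = ∅) {b : Fin n}
    (hb : x b = 0) (i : Fin n) : x i = 0 := by
  have hstep : ∀ j, x j = 0 → x (j + 1) = 0 := fun j hj => by
    by_contra hne
    simpa [h] using (show j ∈ zeroRunEnds x by simp [zeroRunEnds, hj, hne])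
  have hrun : ∀ t : ℕ, x (b + t) = 0 := fun t => by
    induction t with
    | zero => simpa using hb
    | succ t ih => simpa [add_assoc] using hstep _ ih
  simpa using hrun (i - b).val

theorem zeroRunEnds_nonempty {x : Fin n → F} (hx : x ≠ 0) (hw : hammingWt x < n) :
    (zeroRunEnds x).Nonempty := by
  obtain ⟨b, hb⟩ : ∃ b, x b = 0 := by
    by_contra! hall
    simp [hammingWt, hall] at hw
  rw [nonempty_iff_ne_empty]
  exact fun h => hx (funext (eq_zero_of_zeroRunEnds_eq_empty h hb))

theorem eq_zero_of_zeroRunEnds_eq_singleton {x : Fin n → F} {e : Fin n}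
    (h : zeroRunEnds x = {e}) (i : Fin n) (hi : hammingWt x ≤ i.val) : x (i + (e + 1)) = 0 := by
  set s := e + 1
  have hstep : ∀ a : ℕ, a + 1 < n → x (a + s) = 0 → x ((a + 1 : ℕ) + s) = 0 := by
    intro a ha hz
    by_contra hne
    have hmem : (a : Fin n) + s ∈ zeroRunEnds x := by
      simp only [zeroRunEnds, mem_filter, mem_univ, true_and]
      refine ⟨hz, ?_⟩
      convert hne using 2
      push_cast; ring
    rw [h, mem_singleton] at hmem
    have : (((a + 1 : ℕ) : Fin n)).val = 0 := by
      rw [show ((a + 1 : ℕ) : Fin n) = 0 by push_cast; linear_combination hmem]; rfl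
    rw [Fin.val_natCast, Nat.mod_eq_of_lt ha] at this
    omega
  have hrun : ∀ a b : ℕ, a ≤ b → b < n → x (a + s) = 0 → x (b + s) = 0 := by
    intro a b hab
    induction b, hab using Nat.le_induction with
    | base => exact fun _ hz => hz
    | succ b _ ih => exact fun hb hz => hstep b hb (ih (by omega) hz)
  by_contra hne
  -- otherwise `x` is nonzero at the `i + 1` positions `s, s + 1, …, s + i`
  have hsupp : ∀ a ∈ range (i.val + 1), (a : Fin n) + s ∈ univ.filter fun j => x j ≠ 0 := by
    intro a ha
    rw [mem_range] at ha
    refine mem_filter.mpr ⟨mem_univ _, fun hz => hne ?_⟩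
    simpa using hrun a i.val (by omega) i.isLt (by simpa using hz)
  have hinj : Set.InjOn (fun a : ℕ => (a : Fin n) + s) (range (i.val + 1)) := by
    intro a ha b hb hab
    simp only [coe_range, Set.mem_Iio] at ha hb
    have := congrArg Fin.val (add_right_cancel hab)
    rwa [Fin.val_natCast, Fin.val_natCast, Nat.mod_eq_of_lt (by omega),
      Nat.mod_eq_of_lt (by omega)] at this
  have : i.val + 1 ≤ hammingWt x := by simpa [hammingWt] using card_le_card_of_injOn _ hsupp hinj
  omega

theorem pairWt_le_of_forall_le_eq_zero {x : Fin n → F} {m : ℕ}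
    (h : ∀ i : Fin n, m ≤ i.val → x i = 0) : pairWt x ≤ m + 1 := by
  have hn := NeZero.pos n
  have hsub : univ.filter (fun i : Fin n => ¬(x i = 0 ∧ x (i + 1) = 0)) ⊆
      insert ⟨n - 1, by omega⟩ (univ.filter fun i : Fin n => i.val < m) := by
    intro i hi
    simp only [mem_filter, mem_univ, true_and, mem_insert, Fin.ext_iff] at hi ⊢
    by_cases hlast : i.val = n - 1
    · exact .inl hlast
    · have hsucc := Fin.val_add_one_of_lt' (i := i) (by omega)
      by_contra! hout
      exact hi ⟨h i hout.2, h _ (by omega)⟩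
  calc pairWt x ≤ #(univ.filter fun i : Fin n => i.val < m) + 1 :=
        (card_le_card hsub).trans (card_insert_le _ _)
    _ ≤ m + 1 := by rw [Fin.card_filter_val_lt]; omega

end Weights

theorem linearIndependent_of_triangular {ι κ K : Type*} [Field K] [Fintype ι] [LinearOrder ι]
    (v : ι → κ → K) (p : ι → κ) (hdiag : ∀ i, v i (p i) ≠ 0)
    (hlt : ∀ ⦃i j⦄, j < i → v i (p j) = 0) : LinearIndependent K v := by
  let M : Matrix ι ι K := Matrix.of fun i j => v i (p j)
  have hM : M.IsUpperTriangular := fun _ _ h => hlt h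
  have hunit : IsUnit M := by
    rw [Matrix.isUnit_iff_isUnit_det, Matrix.det_of_isUpperTriangular hM]
    exact (prod_ne_zero_iff.mpr fun i _ => hdiag i).isUnit
  exact .of_comp (LinearMap.funLeft K K p) (Matrix.linearIndependent_rows_iff_isUnit.mpr hunit)

theorem exists_ne_zero_forall_le_eq_zero {F : Type*} [Field F] {n : ℕ}
    (Code : Submodule F (Fin n → F)) {m : ℕ} (h : n - m < finrank F Code) :
    ∃ c ∈ Code, c ≠ 0 ∧ ∀ i : Fin n, m ≤ i.val → c i = 0 := by
  let restrict : Code →ₗ[F] Fin (n - m) → F :=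
    LinearMap.funLeft F F (fun j : Fin (n - m) => (⟨m + j, by omega⟩ : Fin n)) ∘ₗ
      Code.subtype
  obtain ⟨c, hker, hc0⟩ := Submodule.exists_mem_ne_zero_of_ne_bot
    (LinearMap.ker_ne_bot_of_finrank_lt (f := restrict) (by simpa using h))
  refine ⟨c, c.2, by simpa using hc0, fun i hi => ?_⟩
  have := congrFun (LinearMap.mem_ker.mp hker) ⟨i - m, by omega⟩
  simp only [restrict, LinearMap.comp_apply, LinearMap.funLeft_apply, Submodule.subtype_apply,
    Pi.zero_apply] at this
  rwa [show (⟨m + (i.val - m), _⟩ : Fin n) = i from Fin.ext (by dsimp only; omega)] at this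

section Constacyclic

variable {F : Type*} [Field F] {n : ℕ} [NeZero n] {η : F}

theorem constaShift_iterate_eq_zero_iff (hη : η ≠ 0) (t : ℕ) (c : Fin n → F) (i : Fin n) :
    (constaShift η)^[t] c i = 0 ↔ c (i - t) = 0 := by
  induction t generalizing c with
  | zero => simp
  | succ t ih =>
    rw [Function.iterate_succ_apply, ih, constaShift, mul_eq_zero, Nat.cast_succ,
      sub_add_eq_sub_sub]
    split_ifs <;> simp [hη]

theorem exists_mem_eq_zero_iff_add (hη : η ≠ 0) {Code : Submodule F (Fin n → F)}
    (hshift : ∀ c ∈ Code, constaShift η c ∈ Code) {c : Fin n → F} (hc : c ∈ Code)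
    (t : Fin n) :
    ∃ g ∈ Code, ∀ i, g i = 0 ↔ c (i + t) = 0 :=
  ⟨(constaShift η)^[(-t).val] c,
    Set.MapsTo.iterate (s := (Code : Set (Fin n → F))) hshift _ hc,
    fun i => by rw [constaShift_iterate_eq_zero_iff hη, Fin.cast_val_eq_self, sub_neg_eq_add]⟩

theorem sub_add_one_le_finrank_of_mem_burst (hη : η ≠ 0) {Code : Submodule F (Fin n → F)}
    (hshift : ∀ c ∈ Code, constaShift η c ∈ Code) {g : Fin n → F} (hg : g ∈ Code)
    (hg0 : g 0 ≠ 0) {m : ℕ} (hm : ∀ i : Fin n, m ≤ i.val → g i = 0) :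
    n - m + 1 ≤ finrank F Code := by
  have hm1 : 1 ≤ m := by
    by_contra h
    exact hg0 (hm 0 (by rw [Fin.val_zero]; omega))
  have hval : ∀ j : Fin (n - m + 1), ((j.val : Fin n)).val = j.val := fun j =>
    Fin.val_cast_of_lt (by have := j.isLt; have := NeZero.pos n; omega)
  set v : Fin (n - m + 1) → Fin n → F := fun j => (constaShift η)^[j] g
  have hv : LinearIndependent F v := by
    refine linearIndependent_of_triangular v (fun j => (j.val : Fin n)) (fun j => ?_) ?_
    · rw [Ne, constaShift_iterate_eq_zero_iff hη, sub_self]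
      exact hg0
    · intro i j hji
      rw [constaShift_iterate_eq_zero_iff hη]
      apply hm
      rw [Fin.coe_sub_iff_lt.mpr (by rw [Fin.lt_def, hval, hval]; exact hji), hval, hval]
      omega
  have hspan : Submodule.span F (Set.range v) ≤ Code :=
    Submodule.span_le.mpr (Set.range_subset_iff.mpr fun j =>
      Set.MapsTo.iterate (s := (Code : Set (Fin n → F))) hshift _ hg)
  simpa [finrank_span_eq_card hv] using Submodule.finrank_mono hspan

theorem exists_mem_burst_of_pairWt_le [DecidableEq F] (hη : η ≠ 0)
    {Code : Submodule F (Fin n → F)} (hshift : ∀ c ∈ Code, constaShift η c ∈ Code)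
    {d : ℕ} (hdn : d < n) (hd : IsLeast {w : ℕ | ∃ c ∈ Code, c ≠ 0 ∧ hammingWt c = w} d)
    {c : Fin n → F} (hc : c ∈ Code) (hc0 : c ≠ 0) (hpc : pairWt c ≤ d + 1) :
    ∃ g ∈ Code, g 0 ≠ 0 ∧ ∀ i : Fin n, d ≤ i.val → g i = 0 := by
  obtain ⟨c, hc, hc0, hpc, hwn⟩ :
      ∃ c ∈ Code, c ≠ 0 ∧ pairWt c ≤ d + 1 ∧ hammingWt c < n := by
    by_cases hw : hammingWt c < n
    · exact ⟨c, hc, hc0, hpc, hw⟩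
    · obtain ⟨c', hc', hc'0, hwc'⟩ := hd.1
      have := pairWt_eq_hammingWt_add_card_zeroRunEnds c
      have := pairWt_le c'
      exact ⟨c', hc', hc'0, by omega, by omega⟩
  have hwd : d ≤ hammingWt c := hd.2 ⟨c, hc, hc0, rfl⟩
  have hsplit := pairWt_eq_hammingWt_add_card_zeroRunEnds c
  have hpos := (zeroRunEnds_nonempty hc0 hwn).card_pos
  obtain ⟨e, he⟩ := card_eq_one.mp (by omega : #(zeroRunEnds c) = 1)
  obtain ⟨g, hg, hgc⟩ := exists_mem_eq_zero_iff_add hη hshift hc (e + 1)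
  refine ⟨g, hg, ?_, fun i hi =>
    (hgc i).mpr (eq_zero_of_zeroRunEnds_eq_singleton he i (by omega))⟩
  rw [Ne, hgc, zero_add]
  exact (mem_filter.mp (he ▸ mem_singleton_self e)).2.2

end Constacyclic

theorem stmt13_general {F : Type*} [Field F] [DecidableEq F] {n : ℕ} [NeZero n]
    (η : F) (hη : η ≠ 0) (Code : Submodule F (Fin n → F))
    (hshift : ∀ c ∈ Code, constaShift η c ∈ Code)
    (d k : ℕ) (hdn : d < n)
    (hd : IsLeast {w : ℕ | ∃ c ∈ Code, c ≠ 0 ∧ hammingWt c = w} d)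
    (hk : Module.finrank F Code = k) :
    (∀ c ∈ Code, c ≠ 0 → d + 2 ≤ pairWt c) ↔ k < n - d + 1 := by
  constructor
  · intro hpair
    by_contra! hk'
    obtain ⟨c, hc, hc0, hvanish⟩ := exists_ne_zero_forall_le_eq_zero Code (m := d) (by omega)
    have := hpair c hc hc0
    have := pairWt_le_of_forall_le_eq_zero hvanish
    omega
  · intro hk' c hc hc0
    by_contra! hlt
    obtain ⟨g, hg, hg0, hvanish⟩ :=
      exists_mem_burst_of_pairWt_le hη hshift hdn hd hc hc0 (by omega)
    have := sub_add_one_le_finrank_of_mem_burst hη hshift hg hg0 hvanish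
    omega

theorem stmt13 {F : Type*} [Field F] [DecidableEq F] {n : ℕ} [NeZero n]
    (η : F) (hη : η ≠ 0) (Code : Submodule F (Fin n → F))
    (hshift : ∀ c ∈ Code, constaShift η c ∈ Code)
    (d k : ℕ) (h2 : 2 ≤ d) (hdn : d < n)
    (hd : IsLeast {w : ℕ | ∃ c ∈ Code, c ≠ 0 ∧ hammingWt c = w} d)
    (hk : Module.finrank F Code = k) :
    (∀ c ∈ Code, c ≠ 0 → d + 2 ≤ pairWt c) ↔ k < n - d + 1 :=
  stmt13_general η hη Code hshift d k hdn hd hk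
end

section
/- Let p be a prime, q a power of p, and let c(x) = (x^l - 1)^t v(x) be a polynomial over F_q with gcd(l,p)=1, 0 ≤ t ≤ p^e - 1, and (x^l - 1) ∤ v(x), regarded as a codeword of length l·p^e (i.e., reduced modulo x^{l p^e} - 1). If c has minimum Hamming weight in the repeated-root cyclic code it generates considerations, then w_H(c) = P_t · N_v, where P_t = ∏_i (t_i + 1) with t_i the digits of the base-p expansion of t, and N_v = w_H(v(x) mod (x^l - 1)). -/
/-!
Split a polynomial into its polyphase components `∑ₖ a_{mk+j} Xᵏ` (`j < m`): its weight is the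
sum of their weights, the `j`-th coefficient of `a mod (X^m - 1)` is the value at `1` of the
`j`-th component, and multiplying by `X^m - 1` multiplies every component by `X - 1`.

Lower bound. Hence `w((X^l - 1)^t v) ≥ P_t · w(v mod (X^l - 1))` as soon as
`w((X - 1)^t u) ≥ P_t` whenever `u(1) ≠ 0`. For the latter write `t = t₀ + p s`, so that
`(X - 1)^t u = (X^p - 1)^s g` with `g = (X - 1)^t₀ u`: the reduction of `g` modulo `X^p - 1` is
nonzero, of degree `< p` and divisible by `(X - 1)^t₀`, so it has at least `t₀ + 1` terms, and
the same splitting (now modulo `p`) with induction on `t` gives `(t₀ + 1) P_s = P_t`.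

Upper bound. With `v̄ = v mod (X^l - 1)`, Frobenius gives `v̄^(p^e) ≡ v^(p^e)` modulo
`(X^l - 1)^(p^e) = X^(l p^e) - 1`, so `f = (X^l - 1)^t v̄^(p^e)` reduced modulo `X^(l p^e) - 1` is
congruent to `c · v^(p^e - 1)` and lies in the code. It is nonzero because `X^l - 1` is
squarefree (`p ∤ l`) and `t < p^e`, and its weight is at most
`w((X - 1)^t) · w(v̄) ≤ P_t · w(v̄)`, since expansion `X ↦ X^l` and Frobenius never
increase weights. Minimality of `c` closes the gap.
-/

open Polynomial Finset

/-- The paper's `P_t`; by Lucas' theorem it counts the `k ≤ t` with `p ∤ t.choose k`. -/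
def lucasWeight (p t : ℕ) : ℕ := ((Nat.digits p t).map (· + 1)).prod

theorem lucasWeight_zero (p : ℕ) : lucasWeight p 0 = 1 := by simp [lucasWeight]

theorem lucasWeight_of_pos {p t : ℕ} (hp : 1 < p) (ht : 0 < t) :
    lucasWeight p t = (t % p + 1) * lucasWeight p (t / p) := by
  rw [lucasWeight, Nat.digits_def' hp ht, List.map_cons, List.prod_cons, lucasWeight]

theorem Squarefree.dvd_of_pow_dvd_pow_mul_pow {M : Type*} [CommMonoidWithZero M] [IsCancelMulZero M]
    [DecompositionMonoid M] [Nontrivial M] {q w : M} (hq : Squarefree q) {t n : ℕ} (htn : t < n)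
    (h : q ^ n ∣ q ^ t * w ^ n) : q ∣ w := by
  rw [← Nat.add_sub_of_le htn.le, pow_add, mul_dvd_mul_iff_left (pow_ne_zero _ hq.ne_zero)] at h
  exact (hq.dvd_pow_iff_dvd (by omega)).1 ((dvd_pow_self q (by omega)).trans h)

namespace Polynomial

section Polyphase

variable {R : Type*} {m j : ℕ}

noncomputable def polyphase [Semiring R] (m j : ℕ) (a : R[X]) : R[X] :=
  ∑ k ∈ range (a.natDegree + 1), monomial k (a.coeff (m * k + j))

section Semiring

variable [Semiring R]

theorem coeff_polyphase (hm : 0 < m) (a : R[X]) (k : ℕ) :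
    (polyphase m j a).coeff k = a.coeff (m * k + j) := by
  simp only [polyphase, finsetSum_coeff, coeff_monomial, Finset.sum_ite_eq', mem_range]
  split_ifs with hk
  · rfl
  · exact (coeff_eq_zero_of_natDegree_lt (by nlinarith)).symm

theorem polyphase_add (hm : 0 < m) (a b : R[X]) :
    polyphase m j (a + b) = polyphase m j a + polyphase m j b := by
  ext k
  simp only [coeff_polyphase hm, coeff_add]

theorem polyphase_monomial (hm : 0 < m) (hj : j < m) (n : ℕ) (c : R) :
    polyphase m j (monomial n c) = if n % m = j then monomial (n / m) c else 0 := by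
  have key : ∀ k, m * k + j = n ↔ n % m = j ∧ n / m = k := fun k => by
    rw [and_comm, Nat.div_mod_unique hm]
    omega
  ext k
  simp only [coeff_polyphase hm, coeff_monomial, eq_comm (a := n), key]
  split_ifs <;> simp_all [coeff_monomial]

theorem card_support_eq_sum_polyphase (hm : 0 < m) (a : R[X]) :
    #a.support = ∑ j ∈ range m, #(polyphase m j a).support := by
  rw [card_eq_sum_card_fiberwise (f := (· % m)) (t := range m)
    fun n _ => mem_range.2 (Nat.mod_lt n hm)]
  refine sum_congr rfl fun j hj => (card_nbij' (m * · + j) (· / m) ?_ ?_ ?_ ?_).symm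
  · intro k hk
    simp_all [coeff_polyphase hm, Nat.mod_eq_of_lt]
  · intro n hn
    obtain ⟨hn, rfl⟩ := mem_filter.1 hn
    simpa [coeff_polyphase hm, Nat.div_add_mod] using hn
  · intro k _
    simp_all [Nat.mul_add_div hm, Nat.div_eq_of_lt]
  · intro n hn
    obtain ⟨-, rfl⟩ := mem_filter.1 hn
    exact Nat.div_add_mod n m

end Semiring

section Ring

variable [Ring R]

theorem polyphase_X_pow_sub_one_mul (hj : j < m) (a : R[X]) :
    polyphase m j ((X ^ m - 1) * a) = (X - 1) * polyphase m j a := by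
  have hm : 0 < m := by omega
  ext k
  simp only [coeff_polyphase hm, sub_mul, one_mul, coeff_sub, X_pow_mul, X_mul, coeff_mul_X_pow']
  congr 1
  rcases k with _ | k
  · simp [show ¬ m ≤ j by omega]
  · rw [if_pos (by nlinarith), coeff_mul_X, coeff_polyphase hm]
    congr 1
    rw [Nat.mul_succ]
    omega

theorem polyphase_X_pow_sub_one_pow_mul (hj : j < m) (s : ℕ) (a : R[X]) :
    polyphase m j ((X ^ m - 1) ^ s * a) = (X - 1) ^ s * polyphase m j a := by
  induction s with
  | zero => simp
  | succ s ih => rw [pow_succ', mul_assoc, polyphase_X_pow_sub_one_mul hj, ih, pow_succ', mul_assoc]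

theorem monic_X_pow_sub_one (hm : 0 < m) : (X ^ m - 1 : R[X]).Monic :=
  leadingCoeff_X_pow_sub_one hm

end Ring

variable [CommRing R] [Nontrivial R]

theorem natDegree_modByMonic_X_pow_sub_one_lt (hm : 0 < m) (a : R[X]) :
    (a %ₘ (X ^ m - 1)).natDegree < m := by
  have hdeg : (X ^ m - 1 : R[X]).natDegree = m := by
    simpa using natDegree_X_pow_sub_C (n := m) (r := (1 : R))
  have hne : (X ^ m - 1 : R[X]) ≠ 1 := fun h => by rw [h, natDegree_one] at hdeg; omega
  simpa [hdeg] using natDegree_modByMonic_lt a (monic_X_pow_sub_one hm) hne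

theorem monomial_modByMonic_X_pow_sub_one (hm : 0 < m) (n : ℕ) (c : R) :
    monomial n c %ₘ (X ^ m - 1) = monomial (n % m) c := by
  have hdvd : X ^ m - 1 ∣ monomial n c - monomial (n % m) c := by
    have : monomial n c - monomial (n % m) c = monomial (n % m) c * ((X ^ m) ^ (n / m) - 1) := by
      rw [mul_sub, mul_one, ← pow_mul, monomial_mul_X_pow, Nat.mod_add_div]
    simpa [this] using (sub_dvd_pow_sub_pow (X ^ m : R[X]) 1 (n / m)).mul_left _
  rw [modByMonic_eq_of_dvd_sub (monic_X_pow_sub_one hm) hdvd,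
    (modByMonic_eq_self_iff (monic_X_pow_sub_one hm)).2]
  rw [show (X ^ m - 1 : R[X]).degree = m by simpa using degree_X_pow_sub_C hm (1 : R)]
  exact (degree_monomial_le _ _).trans_lt (by exact_mod_cast Nat.mod_lt n hm)

theorem coeff_modByMonic_X_pow_sub_one (hj : j < m) (a : R[X]) :
    (a %ₘ (X ^ m - 1)).coeff j = (polyphase m j a).eval 1 := by
  have hm : 0 < m := by omega
  induction a using Polynomial.induction_on' with
  | add a b ha hb => rw [add_modByMonic, coeff_add, polyphase_add hm, eval_add, ha, hb]
  | monomial n c =>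
    rw [monomial_modByMonic_X_pow_sub_one hm, polyphase_monomial hm hj, coeff_monomial]
    split_ifs <;> simp

theorem mul_card_support_modByMonic_le {s N : ℕ} (hm : 0 < m)
    (h : ∀ u : R[X], u.eval 1 ≠ 0 → N ≤ #((X - 1) ^ s * u).support) (g : R[X]) :
    N * #(g %ₘ (X ^ m - 1)).support ≤ #((X ^ m - 1) ^ s * g).support := by
  have hsupp : (g %ₘ (X ^ m - 1)).support ⊆ range m :=
    supp_subset_range (natDegree_modByMonic_X_pow_sub_one_lt hm g)
  calc N * #(g %ₘ (X ^ m - 1)).support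
      = ∑ _j ∈ (g %ₘ (X ^ m - 1)).support, N := by rw [sum_const, smul_eq_mul, mul_comm]
    _ ≤ ∑ j ∈ (g %ₘ (X ^ m - 1)).support,
          #(polyphase m j ((X ^ m - 1) ^ s * g)).support := by
      refine sum_le_sum fun j hj => ?_
      have hjm : j < m := mem_range.1 (hsupp hj)
      rw [polyphase_X_pow_sub_one_pow_mul hjm]
      exact h _ (coeff_modByMonic_X_pow_sub_one hjm g ▸ mem_support_iff.1 hj)
    _ ≤ ∑ j ∈ range m, #(polyphase m j ((X ^ m - 1) ^ s * g)).support :=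
      sum_le_sum_of_subset hsupp
    _ = _ := (card_support_eq_sum_polyphase hm _).symm

theorem card_support_modByMonic_X_pow_sub_one_le (hm : 0 < m) (a : R[X]) :
    #(a %ₘ (X ^ m - 1)).support ≤ #a.support := by
  simpa using mul_card_support_modByMonic_le (s := 0) (N := 1) hm
    (fun u hu => by simpa [card_pos] using fun h : u = 0 => hu (by simp [h])) a

end Polyphase

section Sparsity

variable {R : Type*} [CommSemiring R]

theorem card_support_expand_le {m : ℕ} (hm : 0 < m) (a : R[X]) :
    #(expand R m a).support ≤ #a.support := by
  classical
  have hsub : (expand R m a).support ⊆ a.support.image (m * ·) := by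
    intro n hn
    rw [mem_support_iff, coeff_expand hm] at hn
    split_ifs at hn with h
    · exact mem_image.2 ⟨n / m, mem_support_iff.2 hn, Nat.mul_div_cancel' h⟩
    · exact absurd rfl hn
  exact (card_le_card hsub).trans card_image_le

theorem card_support_pow_expChar_pow_le (p : ℕ) [ExpChar R p] (n : ℕ) (a : R[X]) :
    #(a ^ p ^ n).support ≤ #a.support := by
  rw [← map_iterateFrobenius_expand]
  exact (card_le_card (support_map_subset _ _)).trans
    (card_support_expand_le (pow_pos (expChar_pos R p) n) a)

end Sparsity

section LucasWeight

variable {R : Type*} [CommRing R] (p : ℕ) [Fact p.Prime] [CharP R p]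

theorem card_support_X_sub_one_pow_le (t : ℕ) :
    #((X - 1 : R[X]) ^ t).support ≤ lucasWeight p t := by
  induction t using Nat.strong_induction_on with
  | _ t ih =>
    have hp := (Fact.out : p.Prime).one_lt
    rcases Nat.eq_zero_or_pos t with rfl | ht
    · simpa [lucasWeight_zero] using card_supp_le_succ_natDegree (1 : R[X])
    have hsplit : (X - 1 : R[X]) ^ t = (X - 1) ^ (t % p) * ((X - 1) ^ (t / p)) ^ p := by
      rw [← pow_mul, ← pow_add, Nat.mod_add_div']
    have hlow : #((X - 1 : R[X]) ^ (t % p)).support ≤ t % p + 1 := by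
      have hdeg : (X - 1 : R[X]).natDegree ≤ 1 := by simpa using natDegree_X_sub_C_le (1 : R)
      refine (card_supp_le_succ_natDegree _).trans (Nat.succ_le_succ ?_)
      simpa using natDegree_pow_le_of_le (t % p) hdeg
    have hhigh : #(((X - 1 : R[X]) ^ (t / p)) ^ p).support ≤ lucasWeight p (t / p) := by
      simpa using (card_support_pow_expChar_pow_le p 1 _).trans (ih _ (Nat.div_lt_self ht hp))
    rw [hsplit, lucasWeight_of_pos hp ht]
    exact card_support_mul_le.trans (Nat.mul_le_mul hlow hhigh)

theorem card_support_X_pow_sub_one_pow_le {l : ℕ} (hl : 0 < l) (t : ℕ) :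
    #((X ^ l - 1 : R[X]) ^ t).support ≤ lucasWeight p t := by
  have hexpand : (X ^ l - 1 : R[X]) ^ t = expand R l ((X - 1) ^ t) := by
    rw [map_pow, map_sub, expand_X, map_one]
  exact hexpand ▸ (card_support_expand_le hl _).trans (card_support_X_sub_one_pow_le p t)

end LucasWeight

theorem pow_expChar_pow_dvd_mul_modByMonic_pow_sub {R : Type*} [CommRing R] (p : ℕ)
    [ExpChar R p] (n : ℕ) (a q v : R[X]) :
    q ^ p ^ n ∣ (a * (v %ₘ q) ^ p ^ n) %ₘ q ^ p ^ n - a * v ^ p ^ n := by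
  have hfrob : q ^ p ^ n ∣ (v %ₘ q) ^ p ^ n - v ^ p ^ n := by
    rw [← sub_pow_expChar_pow]
    exact pow_dvd_pow_of_dvd (dvd_modByMonic_sub v q) _
  convert dvd_add (dvd_modByMonic_sub (a * (v %ₘ q) ^ p ^ n) (q ^ p ^ n)) (hfrob.mul_left a)
    using 1
  ring

theorem pow_mul_modByMonic_pow_modByMonic_pow_ne_zero {K : Type*} [Field K] {q v : K[X]}
    (hq : q.Monic) (hsq : Squarefree q) (hv : ¬q ∣ v) {t n : ℕ} (htn : t < n) :
    (q ^ t * (v %ₘ q) ^ n) %ₘ q ^ n ≠ 0 := by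
  rw [Ne, modByMonic_eq_zero_iff_dvd (hq.pow n)]
  exact fun h => hv (dvd_modByMonic_iff_dvd.1 (hsq.dvd_of_pow_dvd_pow_mul_pow htn h))

section CharP

variable {K : Type*} [Field K] (p : ℕ) [CharP K p]

theorem lt_card_support_of_X_sub_C_pow_dvd {a : K} (ha : a ≠ 0) {k : ℕ} :
    ∀ {r : K[X]}, r ≠ 0 → r.natDegree < p → (X - C a) ^ k ∣ r → k < #r.support := by
  induction k with
  | zero => exact fun hr _ _ => card_pos.2 (support_nonempty.2 hr)
  | succ k ih =>
    intro r hr hdeg hdvd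
    set d := r.natDegree
    -- `X·D - d` kills the leading term, rescales every other term by a nonzero scalar (all
    -- exponents are `< p`), and lowers the multiplicity of the root `a` by at most one.
    set s := X * derivative r - C (d : K) * r with hs
    have hcoeff : ∀ n, s.coeff n = ((n : K) - d) * r.coeff n := by
      rintro (_ | n)
      · simp [hs]
      · simp [hs, coeff_X_mul, coeff_derivative]
        ring
    have hsupp : s.support = r.support.erase d := by
      ext n
      simp only [mem_support_iff, mem_erase, hcoeff, ne_eq, mul_eq_zero, sub_eq_zero, not_or]
      refine and_congr_left fun hn => ?_
      rw [CharP.natCast_eq_natCast K p, Nat.ModEq, Nat.mod_eq_of_lt hdeg,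
        Nat.mod_eq_of_lt ((le_natDegree_of_ne_zero hn).trans_lt hdeg)]
    have hs0 : s ≠ 0 := by
      intro h0
      have hcard : #r.support ≤ 1 := by
        have := card_erase_of_mem (natDegree_mem_support_of_nonzero hr)
        rw [← hsupp, h0, support_zero, card_empty] at this
        omega
      have hroot := dvd_iff_isRoot.1 ((dvd_pow_self _ k.succ_ne_zero).trans hdvd)
      rw [← C_mul_X_pow_eq_self hcard, IsRoot, eval_mul, eval_C, eval_pow, eval_X] at hroot
      exact mul_ne_zero (leadingCoeff_ne_zero.2 hr) (pow_ne_zero _ ha) hroot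
    have hsdvd : (X - C a) ^ k ∣ s :=
      dvd_sub ((pow_sub_one_dvd_derivative_of_pow_dvd hdvd).mul_left X)
        (((pow_dvd_pow _ k.le_succ).trans hdvd).mul_left _)
    have hsdeg : s.natDegree < p := by
      have := natDegree_mem_support_of_nonzero hs0
      rw [hsupp] at this
      exact (le_natDegree_of_mem_supp _ (mem_of_mem_erase this)).trans_lt hdeg
    have := ih hs0 hsdeg hsdvd
    rw [hsupp, card_erase_of_mem (natDegree_mem_support_of_nonzero hr)] at this
    omega

theorem lucasWeight_le_card_support_X_sub_one_pow_mul [Fact p.Prime] (t : ℕ) :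
    ∀ {u : K[X]}, u.eval 1 ≠ 0 → lucasWeight p t ≤ #((X - 1) ^ t * u).support := by
  induction t using Nat.strong_induction_on with
  | _ t ih =>
    intro u hu
    have hp : p.Prime := Fact.out
    rcases Nat.eq_zero_or_pos t with rfl | ht
    · rw [lucasWeight_zero, pow_zero, one_mul]
      exact card_pos.2 (support_nonempty.2 fun h => hu (by simp [h]))
    have hXp : (X - 1 : K[X]) ^ p = X ^ p - 1 := by rw [sub_pow_char, one_pow]
    have htp : t % p < p := Nat.mod_lt t hp.pos
    set g := (X - 1 : K[X]) ^ (t % p) * u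
    set r := g %ₘ (X ^ p - 1)
    have hr0 : r ≠ 0 := by
      rw [Ne, modByMonic_eq_zero_iff_dvd (monic_X_pow_sub_one hp.pos), ← hXp,
        ← Nat.add_sub_of_le htp.le, pow_add,
        mul_dvd_mul_iff_left (pow_ne_zero _ (by simpa using X_sub_C_ne_zero (1 : K)))]
      intro h
      exact hu (by simpa using dvd_iff_isRoot.1 ((dvd_pow_self _ (by omega)).trans h))
    have hrdvd : (X - 1 : K[X]) ^ (t % p) ∣ r := by
      have : (X - 1 : K[X]) ^ (t % p) ∣ X ^ p - 1 := hXp ▸ pow_dvd_pow _ htp.le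
      have h := dvd_add (this.trans (dvd_modByMonic_sub g _)) (dvd_mul_right _ u : _ ∣ g)
      rwa [sub_add_cancel] at h
    have hweight : t % p + 1 ≤ #r.support :=
      lt_card_support_of_X_sub_C_pow_dvd p one_ne_zero hr0
        (natDegree_modByMonic_X_pow_sub_one_lt hp.pos g) (by simpa using hrdvd)
    calc lucasWeight p t = (t % p + 1) * lucasWeight p (t / p) := lucasWeight_of_pos hp.one_lt ht
      _ ≤ lucasWeight p (t / p) * #r.support := by
        rw [mul_comm]
        exact Nat.mul_le_mul_left _ hweight
      _ ≤ #((X ^ p - 1) ^ (t / p) * g).support :=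
        mul_card_support_modByMonic_le hp.pos (fun _ => ih _ (Nat.div_lt_self ht hp.one_lt)) g
      _ = _ := by
        rw [← hXp, ← pow_mul, ← mul_assoc, ← pow_add, Nat.div_add_mod]

theorem lucasWeight_mul_card_support_modByMonic_le [Fact p.Prime] {l : ℕ} (hl : 0 < l) (t : ℕ)
    (v : K[X]) :
    lucasWeight p t * #(v %ₘ (X ^ l - 1)).support ≤ #((X ^ l - 1) ^ t * v).support :=
  mul_card_support_modByMonic_le hl (fun _ => lucasWeight_le_card_support_X_sub_one_pow_mul p t) v

theorem squarefree_X_pow_sub_one {l : ℕ} (hl : ¬p ∣ l) : Squarefree (X ^ l - 1 : K[X]) := by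
  simpa using (separable_X_pow_sub_C' p l (1 : K) hl one_ne_zero).squarefree

end CharP

end Polynomial

theorem stmt14_general {F : Type*} [Field F] (p : ℕ) [Fact p.Prime] [CharP F p]
    (l e t : ℕ) (hl : 0 < l) (hcop : Nat.gcd l p = 1)
    (ht : t ≤ p ^ e - 1) (v : Polynomial F)
    (hv : ¬((X : Polynomial F) ^ l - 1 ∣ v))
    (c : Polynomial F) (hc : c = ((X : Polynomial F) ^ l - 1) ^ t * v)
    (Code : Ideal (Polynomial F ⧸
      Ideal.span {(X : Polynomial F) ^ (l * p ^ e) - 1}))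
    (hmem : Ideal.Quotient.mk _ c ∈ Code)
    (hminwt : ∀ f : Polynomial F, f.natDegree < l * p ^ e → f ≠ 0 →
      Ideal.Quotient.mk (Ideal.span {(X : Polynomial F) ^ (l * p ^ e) - 1}) f ∈ Code →
      c.support.card ≤ f.support.card) :
    c.support.card =
      ((Nat.digits p t).map (· + 1)).prod * (v %ₘ ((X : Polynomial F) ^ l - 1)).support.card := by
  have hp : p.Prime := Fact.out
  have hpe : 0 < p ^ e := pow_pos hp.pos e
  have hn : 0 < l * p ^ e := Nat.mul_pos hl hpe
  have hM : (X ^ l - 1 : F[X]) ^ p ^ e = X ^ (l * p ^ e) - 1 := by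
    rw [sub_pow_char_pow, ← pow_mul, one_pow]
  set f := ((X ^ l - 1) ^ t * (v %ₘ (X ^ l - 1)) ^ p ^ e) %ₘ (X ^ (l * p ^ e) - 1)
  have hf0 : f ≠ 0 := by
    have := pow_mul_modByMonic_pow_modByMonic_pow_ne_zero (monic_X_pow_sub_one hl)
      (squarefree_X_pow_sub_one p (hp.coprime_iff_not_dvd.1 (Nat.Coprime.symm hcop))) hv
      (show t < p ^ e by omega)
    rwa [hM] at this
  have hfmem : Ideal.Quotient.mk (Ideal.span {X ^ (l * p ^ e) - 1}) f ∈ Code := by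
    have hcv : (X ^ l - 1) ^ t * v ^ p ^ e = c * v ^ (p ^ e - 1) := by
      rw [hc, mul_assoc, ← pow_succ', Nat.sub_add_cancel hpe]
    have hdvd := pow_expChar_pow_dvd_mul_modByMonic_pow_sub p e ((X ^ l - 1) ^ t) (X ^ l - 1) v
    rw [hM, hcv] at hdvd
    rw [Ideal.Quotient.eq.2 (Ideal.mem_span_singleton.2 hdvd), map_mul]
    exact Code.mul_mem_right _ hmem
  have hfwt : #f.support ≤ lucasWeight p t * #(v %ₘ (X ^ l - 1)).support :=
    (card_support_modByMonic_X_pow_sub_one_le hn _).trans (card_support_mul_le.trans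
      (Nat.mul_le_mul (card_support_X_pow_sub_one_pow_le p hl t)
        (card_support_pow_expChar_pow_le p e _)))
  exact le_antisymm
    ((hminwt f (natDegree_modByMonic_X_pow_sub_one_lt hn _) hf0 hfmem).trans hfwt)
    (hc ▸ lucasWeight_mul_card_support_modByMonic_le p hl t v)

theorem stmt14 {F : Type*} [Field F] (p : ℕ) [Fact p.Prime] [CharP F p]
    (l e t : ℕ) (hl : 0 < l) (he : 0 < e) (hcop : Nat.gcd l p = 1)
    (ht : t ≤ p ^ e - 1) (v : Polynomial F)
    (hv : ¬((X : Polynomial F) ^ l - 1 ∣ v))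
    (c : Polynomial F) (hc : c = ((X : Polynomial F) ^ l - 1) ^ t * v)
    (hcdeg : c.natDegree < l * p ^ e)
    (Code : Ideal (Polynomial F ⧸
      Ideal.span {(X : Polynomial F) ^ (l * p ^ e) - 1}))
    (hmem : Ideal.Quotient.mk _ c ∈ Code)
    (hminwt : ∀ f : Polynomial F, f.natDegree < l * p ^ e → f ≠ 0 →
      Ideal.Quotient.mk (Ideal.span {(X : Polynomial F) ^ (l * p ^ e) - 1}) f ∈ Code →
      c.support.card ≤ f.support.card) :
    c.support.card =
      ((Nat.digits p t).map (· + 1)).prod * (v %ₘ ((X : Polynomial F) ^ l - 1)).support.card :=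
  stmt14_general p l e t hl hcop ht v hv c hc Code hmem hminwt
end

section
/- Let p be an odd prime with 3 | (p-1) and ω ∈ F_p a primitive third root of unity. There is no polynomial c(x) = 1 + a_1 x + a_2 x^2 + a_3 x^3 + a_4 x^4 + a_5 x^l with 6 ≤ l ≤ 3p-2 and all a_i ∈ F_p^* such that c and its derivative c' vanish at 1, ω, and ω^2 as required by membership in the cyclic code with generator (x-1)^4(x-ω)^2(x-ω^2)^2 of length 3p; more precisely, if l ≢ 2 (mod 3), then c(1) = c(ω) = c(ω^2) = 0 forces some a_i = 0, and if l ≡ 2 (mod 3), then c'(1) = c'(ω) = c'(ω^2) = 0 forces a_3 = 0. -/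
/-!
Weight the evaluations at the cube roots of unity by the roots themselves:
`c(1) + ω c(ω) + ω² c(ω²)` equals three times the sum of the coefficients of `c` in degrees
`≡ 2 (mod 3)`. For `c` this is `3 a₂` when `l ≢ 2 (mod 3)`, and for `c'` it is `9 a₃` when
`l ≡ 2 (mod 3)`; since `p ≠ 3` these vanish only if `a₂ = 0`, resp. `a₃ = 0`.
-/

open Polynomial

namespace Polynomial

variable {R : Type*} [CommRing R] {ω : R}

theorem one_add_pow_add_pow_two_mul (hω3 : ω ^ 3 = 1) (hsum : 1 + ω + ω ^ 2 = 0) (k : ℕ) :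
    1 + ω ^ k + ω ^ (2 * k) = if k % 3 = 0 then 3 else 0 := by
  rw [pow_eq_pow_mod k hω3, pow_eq_pow_mod (2 * k) hω3]
  have hω4 : ω ^ 4 = ω := by rw [pow_succ, hω3, one_mul]
  have : k % 3 = 0 ∨ k % 3 = 1 ∨ k % 3 = 2 := by omega
  rcases this with hk | hk | hk
  · rw [if_pos hk, hk, Nat.mul_mod, hk]
    norm_num
  · rw [if_neg (by omega), hk, show 2 * k % 3 = 2 by omega, pow_one, ← hsum]
  · rw [if_neg (by omega), hk, show 2 * k % 3 = 1 by omega, pow_one, ← hsum]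
    ring

variable (ω) in
noncomputable def cubeRootsFilter : R[X] →ₗ[R] R :=
  leval 1 + ω • leval ω + ω ^ 2 • leval (ω ^ 2)

theorem cubeRootsFilter_apply (f : R[X]) :
    cubeRootsFilter ω f = f.eval 1 + ω * f.eval ω + ω ^ 2 * f.eval (ω ^ 2) := rfl

theorem cubeRootsFilter_eq_zero {f : R[X]}
    (hf : f.eval 1 = 0 ∧ f.eval ω = 0 ∧ f.eval (ω ^ 2) = 0) : cubeRootsFilter ω f = 0 := by
  rw [cubeRootsFilter_apply, hf.1, hf.2.1, hf.2.2]
  ring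

theorem cubeRootsFilter_monomial (hω3 : ω ^ 3 = 1) (hsum : 1 + ω + ω ^ 2 = 0) (n : ℕ) (a : R) :
    cubeRootsFilter ω (monomial n a) = if n % 3 = 2 then 3 * a else 0 := by
  have key := one_add_pow_add_pow_two_mul hω3 hsum (n + 1)
  rw [cubeRootsFilter_apply, eval_monomial, eval_monomial, eval_monomial]
  calc a * 1 ^ n + ω * (a * ω ^ n) + ω ^ 2 * (a * (ω ^ 2) ^ n)
      = a * (1 + ω ^ (n + 1) + ω ^ (2 * (n + 1))) := by ring
    _ = _ := by
      by_cases hn : n % 3 = 2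
      · rw [key, if_pos (by omega), if_pos hn, mul_comm]
      · rw [key, if_neg (by omega), if_neg hn, mul_zero]

end Polynomial

theorem stmt16_general (p : ℕ) [Fact p.Prime] (h3 : 3 ∣ p - 1)
    (ω : ZMod p) (hω3 : ω ^ 3 = 1) (hω1 : ω ≠ 1)
    (l : ℕ)
    (a₁ a₂ a₃ a₄ a₅ : ZMod p)
    (c : Polynomial (ZMod p))
    (hc : c = 1 + C a₁ * X + C a₂ * X ^ 2 + C a₃ * X ^ 3 + C a₄ * X ^ 4 +
      C a₅ * X ^ l) :
    (l % 3 ≠ 2 →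
      (c.eval 1 = 0 ∧ c.eval ω = 0 ∧ c.eval (ω ^ 2) = 0) →
      (a₁ = 0 ∨ a₂ = 0 ∨ a₃ = 0 ∨ a₄ = 0 ∨ a₅ = 0)) ∧
    (l % 3 = 2 →
      ((derivative c).eval 1 = 0 ∧ (derivative c).eval ω = 0 ∧
        (derivative c).eval (ω ^ 2) = 0) →
      a₃ = 0) := by
  have hthree : (3 : ZMod p) ≠ 0 := by
    intro h
    have hp3 : p ∣ 3 := (ZMod.natCast_eq_zero_iff 3 p).mp (by exact_mod_cast h)
    have := (Nat.prime_dvd_prime_iff_eq Fact.out Nat.prime_three).mp hp3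
    omega
  have hsum : 1 + ω + ω ^ 2 = 0 := by
    have : (ω - 1) * (1 + ω + ω ^ 2) = 0 := by linear_combination hω3
    exact (mul_eq_zero.mp this).resolve_left (sub_ne_zero.mpr hω1)
  have hmono : c = monomial 0 1 + monomial 1 a₁ + monomial 2 a₂ + monomial 3 a₃ +
      monomial 4 a₄ + monomial l a₅ := by
    simp only [hc, ← C_mul_X_pow_eq_monomial, pow_zero, pow_one, map_one, mul_one]
  refine ⟨fun hl hroots => Or.inr (Or.inl ?_), fun hl hroots => ?_⟩
  · have := cubeRootsFilter_eq_zero hroots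
    simp only [hmono, map_add, cubeRootsFilter_monomial hω3 hsum, hl] at this
    simpa [hthree] using this
  · have := cubeRootsFilter_eq_zero hroots
    have hl1 : (l - 1) % 3 = 1 := by omega
    simp only [hmono, map_add, derivative_monomial, cubeRootsFilter_monomial hω3 hsum, hl1] at this
    simpa [hthree] using this

theorem stmt16 (p : ℕ) [Fact p.Prime] (hodd : Odd p) (h3 : 3 ∣ p - 1)
    (ω : ZMod p) (hω3 : ω ^ 3 = 1) (hω1 : ω ≠ 1)
    (l : ℕ) (hl6 : 6 ≤ l) (hl : l ≤ 3 * p - 2)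
    (a₁ a₂ a₃ a₄ a₅ : ZMod p)
    (c : Polynomial (ZMod p))
    (hc : c = 1 + C a₁ * X + C a₂ * X ^ 2 + C a₃ * X ^ 3 + C a₄ * X ^ 4 +
      C a₅ * X ^ l) :
    (l % 3 ≠ 2 →
      (c.eval 1 = 0 ∧ c.eval ω = 0 ∧ c.eval (ω ^ 2) = 0) →
      (a₁ = 0 ∨ a₂ = 0 ∨ a₃ = 0 ∨ a₄ = 0 ∨ a₅ = 0)) ∧
    (l % 3 = 2 →
      ((derivative c).eval 1 = 0 ∧ (derivative c).eval ω = 0 ∧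
        (derivative c).eval (ω ^ 2) = 0) →
      a₃ = 0) :=
  stmt16_general p h3 ω hω3 hω1 l a₁ a₂ a₃ a₄ a₅ c hc
end

section
/- Let p be an odd prime with 3 | (p-1) and ω a primitive third root of unity in F_p. Suppose c(x) = 1 + a_1 x + a_2 x^{l_1} + a_3 x^{l_1+1} + a_4 x^{l_2} + a_5 x^{l_2+1} with 3 ≤ l_1 < l_2 ≤ 3p-3, l_1 ≡ l_2 ≡ 0 (mod 3), p ∤ l_1 l_2 (l_2 - l_1), and a_i ∈ F_p for all i. If c and its derivatives up to order 3 satisfy c(1)=c(ω)=c(ω^2)=0, c'(1)=c'(ω)=c'(ω^2)=0, c''(1)=0 and c'''(1)=0, then a_5 = 0. -/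
/-!
At a primitive cube root of unity ζ the exponents l₁, l₂ behave like 0, so c(ζ) and ζ·c'(ζ) are
affine functions of ζ. As both vanish at the two distinct points ω and ω², their coefficients
vanish, which gives a₁ + a₃ + a₅ = 0, l₁a₂ + l₂a₄ = 0 and l₁a₃ + l₂a₅ = 0. Eliminating a₂ and a₃
with these, c''(1) = 0 and c'''(1) = 0 become l₂(l₂ - l₁)(a₄ + a₅) = 0 and
l₂(l₂ - l₁)((l₁ + l₂ - 3)a₄ + (l₁ + l₂)a₅) = 0, hence 3·l₂(l₂ - l₁)·a₅ = 0; finally 3 ≠ 0 in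
F_p because F_p contains a primitive cube root of unity.
-/

open Polynomial

section Monomial

variable {R : Type*} [CommRing R]

-- The factor `x` keeps the truncated exponent `n - 1` of `derivative_X_pow` out of the statement.
theorem mul_eval_derivative_X_pow (x : R) (n : ℕ) :
    x * (derivative (X ^ n)).eval x = n * x ^ n := by
  rcases n with _ | n
  · simp
  · rw [derivative_X_pow, eval_mul, eval_C, eval_pow, eval_X, Nat.add_sub_cancel, pow_succ]
    ring

theorem eval_one_derivative_derivative_X_pow (n : ℕ) :
    (derivative (derivative (X ^ n : R[X]))).eval 1 = n * (n - 1) := by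
  rcases n with _ | _ | n <;> simp

theorem eval_one_derivative_derivative_derivative_X_pow (n : ℕ) :
    (derivative (derivative (derivative (X ^ n : R[X])))).eval 1 = n * (n - 1) * (n - 2) := by
  rcases n with _ | _ | _ | n <;> simp
  ring

end Monomial

section SparsePoly

variable {R : Type*} [CommRing R] (a₁ a₂ a₃ a₄ a₅ : R) (l₁ l₂ : ℕ)

noncomputable def sparsePoly : R[X] :=
  1 + C a₁ * X + C a₂ * X ^ l₁ + C a₃ * X ^ (l₁ + 1) + C a₄ * X ^ l₂ + C a₅ * X ^ (l₂ + 1)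

variable {a₁ a₂ a₃ a₄ a₅ l₁ l₂}

theorem eval_sparsePoly_of_pow_eq_one {x : R} (h₁ : x ^ l₁ = 1) (h₂ : x ^ l₂ = 1) :
    (sparsePoly a₁ a₂ a₃ a₄ a₅ l₁ l₂).eval x = (1 + a₂ + a₄) + (a₁ + a₃ + a₅) * x := by
  simp only [sparsePoly, eval_add, eval_mul, eval_C, eval_X, eval_pow, eval_one, pow_succ, h₁, h₂]
  ring

theorem mul_eval_derivative_sparsePoly_of_pow_eq_one {x : R} (h₁ : x ^ l₁ = 1)
    (h₂ : x ^ l₂ = 1) :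
    x * (derivative (sparsePoly a₁ a₂ a₃ a₄ a₅ l₁ l₂)).eval x =
      (l₁ * a₂ + l₂ * a₄) + (a₁ + (l₁ + 1) * a₃ + (l₂ + 1) * a₅) * x := by
  have d₁ := mul_eval_derivative_X_pow x l₁
  have d₁' := mul_eval_derivative_X_pow x (l₁ + 1)
  have d₂ := mul_eval_derivative_X_pow x l₂
  have d₂' := mul_eval_derivative_X_pow x (l₂ + 1)
  rw [h₁] at d₁
  rw [h₂] at d₂
  rw [pow_succ x, h₁, one_mul] at d₁'
  rw [pow_succ x, h₂, one_mul] at d₂'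
  simp only [sparsePoly, derivative_add, derivative_one, derivative_C_mul, derivative_X,
    eval_add, eval_mul, eval_C, eval_zero, eval_one]
  push_cast at d₁' d₂'
  linear_combination a₂ * d₁ + a₃ * d₁' + a₄ * d₂ + a₅ * d₂'

theorem eval_one_derivative_derivative_sparsePoly :
    (derivative (derivative (sparsePoly a₁ a₂ a₃ a₄ a₅ l₁ l₂))).eval 1 =
      l₁ * (l₁ - 1) * a₂ + (l₁ + 1) * l₁ * a₃ + l₂ * (l₂ - 1) * a₄ + (l₂ + 1) * l₂ * a₅ := by
  simp only [sparsePoly, derivative_add, derivative_one, derivative_C_mul, derivative_X,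
    derivative_zero, eval_add, eval_mul, eval_C, eval_zero,
    eval_one_derivative_derivative_X_pow]
  push_cast
  ring

theorem eval_one_derivative_derivative_derivative_sparsePoly :
    (derivative (derivative (derivative (sparsePoly a₁ a₂ a₃ a₄ a₅ l₁ l₂)))).eval 1 =
      l₁ * (l₁ - 1) * (l₁ - 2) * a₂ + (l₁ + 1) * l₁ * (l₁ - 1) * a₃ +
        l₂ * (l₂ - 1) * (l₂ - 2) * a₄ + (l₂ + 1) * l₂ * (l₂ - 1) * a₅ := by
  simp only [sparsePoly, derivative_add, derivative_one, derivative_C_mul, derivative_X,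
    derivative_zero, eval_add, eval_mul, eval_C, eval_zero,
    eval_one_derivative_derivative_derivative_X_pow]
  push_cast
  ring

end SparsePoly

section LinearAlgebra

variable {R : Type*} [CommRing R] [NoZeroDivisors R]

theorem affine_coeffs_eq_zero_of_two_roots {A B x y : R} (hxy : x ≠ y) (hx : A + B * x = 0)
    (hy : A + B * y = 0) : A = 0 ∧ B = 0 := by
  have hB : B = 0 := by
    have : B * (x - y) = 0 := by linear_combination hx - hy
    exact (mul_eq_zero.1 this).resolve_right (sub_ne_zero.2 hxy)
  exact ⟨by simpa [hB] using hx, hB⟩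

theorem eq_zero_of_falling_moments_eq_zero {L₁ L₂ a₂ a₃ a₄ a₅ : R} (hL₂ : L₂ ≠ 0)
    (hL : L₂ - L₁ ≠ 0) (h3 : (3 : R) ≠ 0) (hu : L₁ * a₂ + L₂ * a₄ = 0)
    (hv : L₁ * a₃ + L₂ * a₅ = 0)
    (h2 : L₁ * (L₁ - 1) * a₂ + (L₁ + 1) * L₁ * a₃ + L₂ * (L₂ - 1) * a₄ + (L₂ + 1) * L₂ * a₅ = 0)
    (h3' : L₁ * (L₁ - 1) * (L₁ - 2) * a₂ + (L₁ + 1) * L₁ * (L₁ - 1) * a₃ +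
      L₂ * (L₂ - 1) * (L₂ - 2) * a₄ + (L₂ + 1) * L₂ * (L₂ - 1) * a₅ = 0) :
    a₅ = 0 := by
  have hsum : L₂ * (L₂ - L₁) * (a₄ + a₅) = 0 := by
    linear_combination h2 - (L₁ - 1) * hu - (L₁ + 1) * hv
  have hcube : L₂ * (L₂ - L₁) * ((L₁ + L₂ - 3) * a₄ + (L₁ + L₂) * a₅) = 0 := by
    linear_combination h3' - (L₁ - 1) * (L₁ - 2) * hu - (L₁ ^ 2 - 1) * hv
  have h3a₅ : L₂ * (L₂ - L₁) * (3 * a₅) = 0 := by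
    linear_combination hcube - (L₁ + L₂ - 3) * hsum
  simpa [hL₂, hL, h3] using h3a₅

end LinearAlgebra

theorem coeff_relations_of_eval_primitiveRoot_three {R : Type*} [CommRing R] [IsDomain R]
    {a₁ a₂ a₃ a₄ a₅ : R} {l₁ l₂ : ℕ} {ω : R} (hω : IsPrimitiveRoot ω 3) (hl₁ : 3 ∣ l₁)
    (hl₂ : 3 ∣ l₂) (h0ω : (sparsePoly a₁ a₂ a₃ a₄ a₅ l₁ l₂).eval ω = 0)
    (h0ω' : (sparsePoly a₁ a₂ a₃ a₄ a₅ l₁ l₂).eval (ω ^ 2) = 0)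
    (h1ω : (derivative (sparsePoly a₁ a₂ a₃ a₄ a₅ l₁ l₂)).eval ω = 0)
    (h1ω' : (derivative (sparsePoly a₁ a₂ a₃ a₄ a₅ l₁ l₂)).eval (ω ^ 2) = 0) :
    l₁ * a₂ + l₂ * a₄ = 0 ∧ l₁ * a₃ + l₂ * a₅ = 0 := by
  have hpow : ∀ {ζ : R}, IsPrimitiveRoot ζ 3 → ζ ^ l₁ = 1 ∧ ζ ^ l₂ = 1 := fun hζ ↦
    ⟨(hζ.pow_eq_one_iff_dvd l₁).2 hl₁, (hζ.pow_eq_one_iff_dvd l₂).2 hl₂⟩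
  obtain ⟨hωl₁, hωl₂⟩ := hpow hω
  obtain ⟨hω'l₁, hω'l₂⟩ := hpow (hω.pow_of_coprime 2 (by norm_num))
  have hne : ω ≠ ω ^ 2 := fun h ↦
    absurd (hω.pow_inj (by norm_num) (by norm_num) ((pow_one ω).trans h)) (by norm_num)
  obtain ⟨-, hsum⟩ := affine_coeffs_eq_zero_of_two_roots hne
    (by rwa [← eval_sparsePoly_of_pow_eq_one hωl₁ hωl₂])
    (by rwa [← eval_sparsePoly_of_pow_eq_one hω'l₁ hω'l₂])
  obtain ⟨hu, hweighted⟩ := affine_coeffs_eq_zero_of_two_roots hne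
    (by rw [← mul_eval_derivative_sparsePoly_of_pow_eq_one hωl₁ hωl₂, h1ω, mul_zero])
    (by rw [← mul_eval_derivative_sparsePoly_of_pow_eq_one hω'l₁ hω'l₂, h1ω', mul_zero])
  exact ⟨hu, by linear_combination hweighted - hsum⟩

theorem stmt17_general (p : ℕ) [Fact p.Prime]
    (ω : ZMod p) (hω3 : ω ^ 3 = 1) (hω1 : ω ≠ 1)
    (l₁ l₂ : ℕ) (hl12 : l₁ < l₂)
    (hm1 : l₁ % 3 = 0) (hm2 : l₂ % 3 = 0)
    (hp : ¬(p ∣ l₁ * l₂ * (l₂ - l₁)))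
    (a₁ a₂ a₃ a₄ a₅ : ZMod p)
    (c : Polynomial (ZMod p))
    (hc : c = 1 + C a₁ * X + C a₂ * X ^ l₁ + C a₃ * X ^ (l₁ + 1) +
      C a₄ * X ^ l₂ + C a₅ * X ^ (l₂ + 1))
    (h0 : c.eval 1 = 0 ∧ c.eval ω = 0 ∧ c.eval (ω ^ 2) = 0)
    (h1 : (derivative c).eval 1 = 0 ∧ (derivative c).eval ω = 0 ∧
      (derivative c).eval (ω ^ 2) = 0)
    (h2 : (derivative (derivative c)).eval 1 = 0)
    (h3' : (derivative (derivative (derivative c))).eval 1 = 0) :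
    a₅ = 0 := by
  change c = sparsePoly a₁ a₂ a₃ a₄ a₅ l₁ l₂ at hc
  subst hc
  have hω : IsPrimitiveRoot ω 3 := orderOf_eq_prime hω3 hω1 ▸ IsPrimitiveRoot.orderOf ω
  obtain ⟨hu, hv⟩ := coeff_relations_of_eval_primitiveRoot_three hω
    (Nat.dvd_of_mod_eq_zero hm1) (Nat.dvd_of_mod_eq_zero hm2) h0.2.1 h0.2.2 h1.2.1 h1.2.2
  have h3 : (3 : ZMod p) ≠ 0 := by exact_mod_cast hω.neZero'.out
  have hL₂ : (l₂ : ZMod p) ≠ 0 := by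
    rw [Ne, ZMod.natCast_eq_zero_iff]
    exact fun h ↦ hp ((h.mul_left l₁).mul_right _)
  have hL : (l₂ : ZMod p) - l₁ ≠ 0 := by
    rw [← Nat.cast_sub hl12.le, Ne, ZMod.natCast_eq_zero_iff]
    exact fun h ↦ hp (h.mul_left _)
  rw [eval_one_derivative_derivative_sparsePoly] at h2
  rw [eval_one_derivative_derivative_derivative_sparsePoly] at h3'
  exact eq_zero_of_falling_moments_eq_zero hL₂ hL h3 hu hv h2 h3'

theorem stmt17 (p : ℕ) [Fact p.Prime] (hodd : Odd p) (h3 : 3 ∣ p - 1)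
    (ω : ZMod p) (hω3 : ω ^ 3 = 1) (hω1 : ω ≠ 1)
    (l₁ l₂ : ℕ) (hl1 : 3 ≤ l₁) (hl12 : l₁ < l₂) (hl2 : l₂ ≤ 3 * p - 3)
    (hm1 : l₁ % 3 = 0) (hm2 : l₂ % 3 = 0)
    (hp : ¬(p ∣ l₁ * l₂ * (l₂ - l₁)))
    (a₁ a₂ a₃ a₄ a₅ : ZMod p)
    (c : Polynomial (ZMod p))
    (hc : c = 1 + C a₁ * X + C a₂ * X ^ l₁ + C a₃ * X ^ (l₁ + 1) +
      C a₄ * X ^ l₂ + C a₅ * X ^ (l₂ + 1))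
    (h0 : c.eval 1 = 0 ∧ c.eval ω = 0 ∧ c.eval (ω ^ 2) = 0)
    (h1 : (derivative c).eval 1 = 0 ∧ (derivative c).eval ω = 0 ∧
      (derivative c).eval (ω ^ 2) = 0)
    (h2 : (derivative (derivative c)).eval 1 = 0)
    (h3' : (derivative (derivative (derivative c))).eval 1 = 0) :
    a₅ = 0 :=
  stmt17_general p ω hω3 hω1 l₁ l₂ hl12 hm1 hm2 hp a₁ a₂ a₃ a₄ a₅ c hc h0 h1 h2 h3'
end
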